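/- arXiv:1410.3402 — 7 statements merged into one kernel-verified Lean document; each statement's English description precedes it below -/
import Mathlib

section
/- Let w be a weight on ℝ and suppose there exist constants B, β ≥ 1 such that for all bounded intervals I ⊆ ℝ and all measurable E ⊆ I we have w(E)/w(I) ≤ B (|E|/|I|)^{1/β}. Then w satisfies the reverse Hölder inequality ( (1/|I|) ∫_I w^r )^{1/r} ≤ B^{β/r'} ((β'-1)/(β'-r))^{1/r} · (1/|I|) ∫_I w for all bounded intervals I and all exponents r with 1 < r < β', where β' = β/(β-1) and 1/r + 1/r' = 1. -/
/-!
Let `I = (a, b)`, `W = w(I)`, `A = W / |I|` and let `β'` be the conjugate exponent of `β`.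
Chebyshev's inequality `t |E_t| ≤ w(E_t)` for the superlevel set `E_t = {w ≥ t} ∩ I`, fed
into the hypothesis, gives `w(E_t) ≤ B A (w(E_t) / t)^{1/β} |I|^{1 - 1/β}`, which self-improves
to `w(E_t) ≤ |I| (B A)^{β'} t^{1 - β'}`. Together with the trivial bound `w(E_t) ≤ W` this
controls the distribution function of `w` with respect to the measure `w dx` on `I`, and the
layer-cake formula `∫_I w^r = ∫ w^{r-1} d(w dx) = (r-1) ∫_0^∞ w(E_t) t^{r-2} dt`, split at the
crossover point `t = B^β A` of the two bounds, yields the reverse Hölder inequality.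
-/

open MeasureTheory Set

theorem le_rpow_of_le_mul_div_rpow {β p m C s : ℝ} (hβp : β.HolderConjugate p) (hm : 0 ≤ m)
    (hC : 0 ≤ C) (hs : 0 < s) (h : m ≤ C * (m / s) ^ (1 / β)) : m ≤ C ^ p * s ^ (1 - p) := by
  rcases hm.eq_or_lt with rfl | hm
  · positivity
  have hp := hβp.symm.pos
  have h_root : m ^ (1 / p) ≤ C / s ^ (1 / β) := by
    have hsplit : m = m ^ (1 / p) * m ^ (1 / β) := by
      rw [← Real.rpow_add hm, add_comm, hβp.one_div_add_one_div, div_one, Real.rpow_one]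
    rw [le_div_iff₀ (by positivity),
      ← mul_le_mul_iff_of_pos_right (Real.rpow_pos_of_pos hm (1 / β))]
    calc m ^ (1 / p) * s ^ (1 / β) * m ^ (1 / β) = m * s ^ (1 / β) := by
          rw [mul_right_comm, ← hsplit]
      _ ≤ C * (m / s) ^ (1 / β) * s ^ (1 / β) := by gcongr
      _ = C * m ^ (1 / β) := by
        rw [Real.div_rpow hm.le hs.le, mul_assoc, div_mul_cancel₀ _ (by positivity)]
  calc m = (m ^ (1 / p)) ^ p := by
        rw [← Real.rpow_mul hm.le, one_div_mul_cancel hp.ne', Real.rpow_one]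
    _ ≤ (C / s ^ (1 / β)) ^ p := by gcongr
    _ = C ^ p * s ^ (1 - p) := by
      rw [Real.div_rpow hC (by positivity), ← Real.rpow_mul hs.le, div_eq_mul_inv,
        ← Real.rpow_neg hs.le, one_div_mul_eq_div, hβp.symm.div_conj_eq_sub_one, neg_sub]

theorem lintegral_Ioc_rpow_sub_one {s τ : ℝ} (hs : 0 < s) (hτ : 0 ≤ τ) :
    ∫⁻ t in Ioc 0 τ, ENNReal.ofReal (t ^ (s - 1)) = ENNReal.ofReal (τ ^ s / s) := by
  have hint : IntegrableOn (fun t : ℝ ↦ t ^ (s - 1)) (Ioc 0 τ) := by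
    rw [← intervalIntegrable_iff_integrableOn_Ioc_of_le hτ]
    exact intervalIntegral.intervalIntegrable_rpow' (by linarith)
  rw [← ofReal_integral_eq_lintegral_ofReal hint, ← intervalIntegral.integral_of_le hτ,
    integral_rpow (Or.inl (by linarith)), sub_add_cancel, Real.zero_rpow hs.ne', sub_zero]
  filter_upwards [self_mem_ae_restrict measurableSet_Ioc] with t ht
  exact Real.rpow_nonneg ht.1.le _

theorem lintegral_Ioi_rpow {e τ : ℝ} (he : e < -1) (hτ : 0 < τ) :
    ∫⁻ t in Ioi τ, ENNReal.ofReal (t ^ e) = ENNReal.ofReal (-τ ^ (e + 1) / (e + 1)) := by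
  rw [← ofReal_integral_eq_lintegral_ofReal (integrableOn_Ioi_rpow_of_lt he hτ),
    integral_Ioi_rpow_of_lt he hτ]
  filter_upwards [self_mem_ae_restrict measurableSet_Ioi] with t ht
  exact Real.rpow_nonneg (hτ.trans ht).le _

theorem lintegral_rpow_le_of_meas_le {α : Type*} [MeasurableSpace α] {μ : Measure α}
    {f : α → ℝ} (hf_nn : 0 ≤ᵐ[μ] f) (hf : AEMeasurable f μ) {s q W K τ : ℝ} (hs : 0 < s)
    (hsq : s < q) (hτ : 0 < τ) (hW : 0 ≤ W) (hK : 0 ≤ K)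
    (h_le_W : ∀ t, μ {x | t ≤ f x} ≤ ENNReal.ofReal W)
    (h_le_K : ∀ t, 0 < t → μ {x | t ≤ f x} ≤ ENNReal.ofReal (K * t ^ (-q))) :
    ∫⁻ x, ENNReal.ofReal (f x ^ s) ∂μ ≤
      ENNReal.ofReal (W * τ ^ s + s / (q - s) * (K * τ ^ (s - q))) := by
  have h_low : ∫⁻ t in Ioc 0 τ, μ {x | t ≤ f x} * ENNReal.ofReal (t ^ (s - 1)) ≤
      ENNReal.ofReal (W * (τ ^ s / s)) :=
    calc _ ≤ ∫⁻ t in Ioc 0 τ, ENNReal.ofReal W * ENNReal.ofReal (t ^ (s - 1)) := by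
          gcongr with t; exact h_le_W t
      _ = _ := by
        rw [lintegral_const_mul _ (by fun_prop), lintegral_Ioc_rpow_sub_one hs hτ.le,
          ENNReal.ofReal_mul hW]
  have h_high : ∫⁻ t in Ioi τ, μ {x | t ≤ f x} * ENNReal.ofReal (t ^ (s - 1)) ≤
      ENNReal.ofReal (K * (τ ^ (s - q) / (q - s))) :=
    calc _ ≤ ∫⁻ t in Ioi τ, ENNReal.ofReal K * ENNReal.ofReal (t ^ (s - 1 - q)) := by
          refine setLIntegral_mono_ae (by fun_prop) (ae_of_all _ fun t (ht : τ < t) ↦ ?_)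
          have ht0 : 0 < t := hτ.trans ht
          calc μ {x | t ≤ f x} * ENNReal.ofReal (t ^ (s - 1))
              ≤ ENNReal.ofReal (K * t ^ (-q)) * ENNReal.ofReal (t ^ (s - 1)) := by
                gcongr; exact h_le_K t ht0
            _ = _ := by
              rw [← ENNReal.ofReal_mul (by positivity), ← ENNReal.ofReal_mul hK, mul_assoc,
                ← Real.rpow_add ht0, neg_add_eq_sub]
      _ = _ := by
        rw [lintegral_const_mul _ (by fun_prop), lintegral_Ioi_rpow (by linarith) hτ,
          ← ENNReal.ofReal_mul hK, show s - 1 - q + 1 = s - q by ring, neg_div, ← div_neg,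
          neg_sub]
  rw [lintegral_rpow_eq_lintegral_meas_le_mul μ hf_nn hf hs, ← Ioc_union_Ioi_eq_Ioi hτ.le,
    lintegral_union measurableSet_Ioi (Ioc_disjoint_Ioi le_rfl)]
  calc _ ≤ ENNReal.ofReal s * (ENNReal.ofReal (W * (τ ^ s / s)) +
        ENNReal.ofReal (K * (τ ^ (s - q) / (q - s)))) := by gcongr
    _ = _ := by
      have hqs : 0 < q - s := sub_pos.2 hsq
      rw [← ENNReal.ofReal_add (by positivity) (by positivity), ← ENNReal.ofReal_mul hs.le]
      congr 1
      field_simp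

theorem withDensity_ofReal_apply_eq_setIntegral {α : Type*} [MeasurableSpace α]
    {μ : Measure α} {f : α → ℝ} (hf : Integrable f μ) (hf_nn : 0 ≤ᵐ[μ] f) {S : Set α}
    (hS : MeasurableSet S) :
    μ.withDensity (fun x ↦ ENNReal.ofReal (f x)) S = ENNReal.ofReal (∫ x in S, f x ∂μ) := by
  rw [withDensity_apply _ hS,
    ofReal_integral_eq_lintegral_ofReal hf.integrableOn (ae_restrict_of_ae hf_nn)]

section Weight

variable {w : ℝ → ℝ} {a b β p B : ℝ}

theorem setIntegral_superlevel_le (hw0 : ∀ x, 0 ≤ w x) (hmeas : Measurable w)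
    (hw : IntegrableOn w (Ioo a b)) (hab : a < b) (hβp : β.HolderConjugate p) (hB : 0 ≤ B)
    (habs : ∀ E ⊆ Ioo a b, MeasurableSet E →
      (∫ x in E, w x) / (∫ x in Ioo a b, w x) ≤ B * ((volume E).toReal / (b - a)) ^ (1 / β))
    (hW : 0 < ∫ x in Ioo a b, w x) {t : ℝ} (ht : 0 < t) :
    ∫ x in {x | t ≤ w x} ∩ Ioo a b, w x ≤
      (b - a) * ((B * ((b - a)⁻¹ * ∫ x in Ioo a b, w x)) ^ p * t ^ (1 - p)) := by
  set E := {x | t ≤ w x} ∩ Ioo a b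
  set W := ∫ x in Ioo a b, w x
  set m := ∫ x in E, w x
  have hL : 0 < b - a := sub_pos.2 hab
  have hE : MeasurableSet E := (measurableSet_le measurable_const hmeas).inter measurableSet_Ioo
  have hEI : E ⊆ Ioo a b := inter_subset_right
  have hm : 0 ≤ m := setIntegral_nonneg hE fun x _ ↦ hw0 x
  have h_cheb : t * (volume E).toReal ≤ m :=
    setIntegral_ge_of_const_le_real hE (measure_mono hEI |>.trans_lt measure_Ioo_lt_top).ne
      (fun x hx ↦ hx.1) (hw.mono_set hEI)
  suffices h : (b - a)⁻¹ * m ≤ B * ((b - a)⁻¹ * W) * ((b - a)⁻¹ * m / t) ^ (1 / β) by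
    have := le_rpow_of_le_mul_div_rpow hβp (by positivity) (by positivity) ht h
    rwa [inv_mul_le_iff₀ hL] at this
  calc (b - a)⁻¹ * m = (b - a)⁻¹ * W * (m / W) := by field_simp
    _ ≤ (b - a)⁻¹ * W * (B * ((volume E).toReal / (b - a)) ^ (1 / β)) := by
      gcongr; exact habs E hEI hE
    _ ≤ (b - a)⁻¹ * W * (B * ((b - a)⁻¹ * m / t) ^ (1 / β)) := by
      gcongr _ * (_ * ?_ ^ _)
      · exact hβp.one_div_nonneg
      rw [div_eq_inv_mul, mul_div_assoc]
      gcongr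
      rw [le_div_iff₀ ht]
      linarith
    _ = _ := by ring

theorem lintegral_rpow_sub_one_withDensity_le (hw0 : ∀ x, 0 ≤ w x) (hmeas : Measurable w)
    (hw : IntegrableOn w (Ioo a b)) (hab : a < b) (hβp : β.HolderConjugate p) (hB : 0 < B)
    (habs : ∀ E ⊆ Ioo a b, MeasurableSet E →
      (∫ x in E, w x) / (∫ x in Ioo a b, w x) ≤ B * ((volume E).toReal / (b - a)) ^ (1 / β))
    (hW : 0 < ∫ x in Ioo a b, w x) {r : ℝ} (hr : 1 < r) (hrp : r < p) :
    ∫⁻ x, ENNReal.ofReal (w x ^ (r - 1))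
        ∂(volume.restrict (Ioo a b)).withDensity (fun x ↦ ENNReal.ofReal (w x)) ≤
      ENNReal.ofReal ((b - a) * ((p - 1) / (p - r) * B ^ (β * (r - 1)) *
        ((b - a)⁻¹ * ∫ x in Ioo a b, w x) ^ r)) := by
  set W := ∫ x in Ioo a b, w x
  set A := (b - a)⁻¹ * W
  have hL : 0 < b - a := sub_pos.2 hab
  have hA : 0 < A := by positivity
  have h_meas (t : ℝ) : (volume.restrict (Ioo a b)).withDensity (fun x ↦ ENNReal.ofReal (w x))
      {x | t ≤ w x} = ENNReal.ofReal (∫ x in {x | t ≤ w x} ∩ Ioo a b, w x) := by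
    have hS : MeasurableSet {x | t ≤ w x} := measurableSet_le measurable_const hmeas
    rw [withDensity_ofReal_apply_eq_setIntegral hw (ae_of_all _ hw0) hS,
      Measure.restrict_restrict hS]
  refine (lintegral_rpow_le_of_meas_le (ae_of_all _ hw0) hmeas.aemeasurable (s := r - 1)
    (q := p - 1) (K := (b - a) * (B * A) ^ p) (τ := B ^ β * A) (by linarith) (by linarith)
    (by positivity) hW.le (by positivity) (fun t ↦ ?_) (fun t ht ↦ ?_)).trans_eq ?_
  · rw [h_meas]
    exact ENNReal.ofReal_le_ofReal <| setIntegral_mono_set hw (ae_of_all _ fun x ↦ hw0 x)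
      inter_subset_right.eventuallyLE
  · rw [h_meas, neg_sub, mul_assoc]
    exact ENNReal.ofReal_le_ofReal <|
      setIntegral_superlevel_le hw0 hmeas hw hab hβp hB.le habs hW ht
  · have e1 : A * (B ^ β * A) ^ (r - 1) = B ^ (β * (r - 1)) * A ^ r := by
      rw [Real.mul_rpow (by positivity) hA.le, ← Real.rpow_mul hB.le, mul_left_comm,
        ← Real.rpow_one_add' hA.le (by linarith), add_sub_cancel]
    have e2 : (B * A) ^ p * (B ^ β * A) ^ (r - p) = B ^ (β * (r - 1)) * A ^ r := by
      rw [Real.mul_rpow hB.le hA.le, Real.mul_rpow (by positivity) hA.le, ← Real.rpow_mul hB.le,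
        mul_mul_mul_comm, ← Real.rpow_add hB, ← Real.rpow_add hA, add_sub_cancel,
        show p + β * (r - p) = β * (r - 1) by linear_combination -hβp.mul_eq_add]
    have hW_eq : W = (b - a) * A := (mul_inv_cancel_left₀ hL.ne' W).symm
    congr 1
    rw [show r - 1 - (p - 1) = r - p by ring, show p - 1 - (r - 1) = p - r by ring, hW_eq,
      mul_assoc, e1, mul_assoc, e2]
    have : p - r ≠ 0 := by linarith
    field_simp
    ring

theorem setAverage_rpow_le (hw0 : ∀ x, 0 ≤ w x) (hmeas : Measurable w)
    (hw : IntegrableOn w (Ioo a b)) (hab : a < b) (hβp : β.HolderConjugate p) (hB : 0 < B)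
    (habs : ∀ E ⊆ Ioo a b, MeasurableSet E →
      (∫ x in E, w x) / (∫ x in Ioo a b, w x) ≤ B * ((volume E).toReal / (b - a)) ^ (1 / β))
    {r : ℝ} (hr : 1 < r) (hrp : r < p) :
    (b - a)⁻¹ * ∫ x in Ioo a b, w x ^ r ≤
      (p - 1) / (p - r) * B ^ (β * (r - 1)) * ((b - a)⁻¹ * ∫ x in Ioo a b, w x) ^ r := by
  set μ := (volume.restrict (Ioo a b)).withDensity (fun x ↦ ENNReal.ofReal (w x))
  have hL : 0 < b - a := sub_pos.2 hab
  have h_eq : ∫ x in Ioo a b, w x ^ r = (∫⁻ x, ENNReal.ofReal (w x ^ (r - 1)) ∂μ).toReal := by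
    rw [integral_eq_lintegral_of_nonneg_ae (ae_of_all _ fun x ↦ Real.rpow_nonneg (hw0 x) r)
      (hmeas.pow_const r).aestronglyMeasurable,
      lintegral_withDensity_eq_lintegral_mul _ (by fun_prop) (by fun_prop)]
    congr 1
    refine lintegral_congr fun x ↦ ?_
    rw [Pi.mul_apply, ← ENNReal.ofReal_mul (hw0 x), ← Real.rpow_one_add' (hw0 x) (by linarith),
      add_sub_cancel]
  rcases (setIntegral_nonneg measurableSet_Ioo fun x _ ↦ hw0 x).eq_or_lt with hW | hW
  · have hμ : μ = 0 := by
      rw [← Measure.measure_univ_eq_zero, withDensity_ofReal_apply_eq_setIntegral hw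
        (ae_of_all _ hw0) MeasurableSet.univ, Measure.restrict_univ, ← hW, ENNReal.ofReal_zero]
    rw [h_eq, hμ, ← hW]
    simp [Real.zero_rpow (by linarith : r ≠ 0)]
  · rw [h_eq, inv_mul_le_iff₀ hL]
    have hQ : 0 ≤ (p - 1) / (p - r) := div_nonneg (by linarith) (by linarith)
    exact ENNReal.toReal_le_of_le_ofReal (by positivity)
      (lintegral_rpow_sub_one_withDensity_le hw0 hmeas hw hab hβp hB habs hW hr hrp)

end Weight

theorem one_lt_of_lt_div_sub_one {β r : ℝ} (hr : 1 < r) (h : r < β / (β - 1)) : 1 < β := by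
  by_contra! hβ
  have : β / (β - 1) ≤ 1 := by
    rcases (sub_nonpos.2 hβ).eq_or_lt with h0 | hneg
    · rw [h0, div_zero]; exact zero_le_one
    · exact (div_le_one_of_neg hneg).2 (by linarith)
  linarith

theorem stmt1_general (w : ℝ → ℝ) (hw : ∀ x, 0 ≤ w x) (hmeas : Measurable w)
    (hloc : LocallyIntegrable w volume)
    (B β : ℝ) (hB : 1 ≤ B)
    (habs : ∀ a b : ℝ, a < b → ∀ E ⊆ Set.Ioo a b, MeasurableSet E →
      (∫ x in E, w x) / (∫ x in Set.Ioo a b, w x) ≤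
        B * ((volume E).toReal / (b - a)) ^ (1 / β)) :
    ∀ a b : ℝ, a < b → ∀ r r' : ℝ, 1 < r → r < β / (β - 1) → 1 / r + 1 / r' = 1 →
      ((b - a)⁻¹ * ∫ x in Set.Ioo a b, w x ^ r) ^ (1 / r) ≤
        B ^ (β / r') * ((β / (β - 1) - 1) / (β / (β - 1) - r)) ^ (1 / r) *
          ((b - a)⁻¹ * ∫ x in Set.Ioo a b, w x) := by
  intro a b hab r r' hr hrβ hrr'
  have hβp : β.HolderConjugate (β / (β - 1)) :=
    (Real.holderConjugate_iff_eq_conjExponent (one_lt_of_lt_div_sub_one hr hrβ)).2 rfl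
  have hw_int : IntegrableOn w (Ioo a b) :=
    (hloc.integrableOn_isCompact isCompact_Icc).mono_set Ioo_subset_Icc_self
  have hL : 0 < b - a := sub_pos.2 hab
  have hQ : 0 ≤ (β / (β - 1) - 1) / (β / (β - 1) - r) := div_nonneg (by linarith) (by linarith)
  have hA : 0 ≤ (b - a)⁻¹ * ∫ x in Ioo a b, w x :=
    mul_nonneg (by positivity) (setIntegral_nonneg measurableSet_Ioo fun x _ ↦ hw x)
  have hβr' : β * (r - 1) * (1 / r) = β / r' := by
    rw [div_eq_mul_one_div β r', eq_sub_of_add_eq' hrr']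
    field_simp
  calc _ ≤ ((β / (β - 1) - 1) / (β / (β - 1) - r) * B ^ (β * (r - 1)) *
          ((b - a)⁻¹ * ∫ x in Ioo a b, w x) ^ r) ^ (1 / r) :=
        Real.rpow_le_rpow
          (mul_nonneg (by positivity) (setIntegral_nonneg measurableSet_Ioo fun x _ ↦
            Real.rpow_nonneg (hw x) r))
          (setAverage_rpow_le hw hmeas hw_int hab hβp (by linarith) (habs a b hab) hr hrβ)
          (by positivity)
    _ = _ := by
      rw [Real.mul_rpow (by positivity) (by positivity), Real.mul_rpow hQ (by positivity),
        ← Real.rpow_mul (by positivity), ← Real.rpow_mul hA, mul_one_div_cancel (by positivity),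
        Real.rpow_one, hβr', mul_comm (_ ^ (1 / r))]

/-- reverse Hölder inequality from the absorption property. -/
theorem stmt1 (w : ℝ → ℝ) (hw : ∀ x, 0 ≤ w x) (hmeas : Measurable w)
    (hloc : LocallyIntegrable w volume)
    (B β : ℝ) (hB : 1 ≤ B) (hβ : 1 ≤ β)
    (habs : ∀ a b : ℝ, a < b → ∀ E ⊆ Set.Ioo a b, MeasurableSet E →
      (∫ x in E, w x) / (∫ x in Set.Ioo a b, w x) ≤
        B * ((volume E).toReal / (b - a)) ^ (1 / β)) :
    ∀ a b : ℝ, a < b → ∀ r r' : ℝ, 1 < r → r < β / (β - 1) → 1 / r + 1 / r' = 1 →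
      ((b - a)⁻¹ * ∫ x in Set.Ioo a b, w x ^ r) ^ (1 / r) ≤
        B ^ (β / r') * ((β / (β - 1) - 1) / (β / (β - 1) - r)) ^ (1 / r) *
          ((b - a)⁻¹ * ∫ x in Set.Ioo a b, w x) :=
  stmt1_general w hw hmeas hloc B β hB habs
end

section
/- Let μ be a non-negative locally finite Borel measure on ℝ and let E ⊆ ℝ be measurable with 0 < μ(E) < ∞. For 0 ≤ γ < α < 1, define f := 1_E + γ·1_{E^c} and let M^μ denote the uncentered Hardy–Littlewood maximal operator with respect to μ, M^μ g(x) := sup over bounded intervals I containing x of (1/μ(I)) ∫_I |g| dμ. Then μ({x ∈ ℝ : M^μ f(x) > α}) ≤ (1 + 2(1-α)/(α-γ)) · μ(E). -/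
open MeasureTheory Set
open scoped ENNReal NNReal

/-- The uncentered one-dimensional Hardy–Littlewood maximal operator with respect to
a Borel measure `μ`. -/
noncomputable def Mmu (μ : Measure ℝ) (f : ℝ → ℝ) (x : ℝ) : ℝ :=
  sSup {r : ℝ | ∃ a b : ℝ, a < b ∧ x ∈ Set.Ioo a b ∧ 0 < μ (Set.Ioo a b) ∧
    r = (μ (Set.Ioo a b)).toReal⁻¹ * ∫ y in Set.Ioo a b, |f y| ∂μ}

/-!
If the average of `f = 1_E + γ 1_Eᶜ` over an interval `I` exceeds `α`, then
`(α - γ) μ(I \ E) < (1 - α) μ(I ∩ E)`, so the level set is covered by intervals with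
`μ(I \ E) ≤ c μ(I ∩ E)`, `c = (1 - α) / (α - γ)`. By inner regularity it suffices to bound
compact subsets of their union. A finite subcover can be thinned, without changing its union, until
no point lies in three of its intervals, because of three intervals through a common point one is
contained in the union of the other two. Summing over the thinned cover bounds the measure of the
compact set outside `E` by `c ∑ μ(I ∩ E) ≤ 2 c μ(E)`.
-/

section Multiplicity

open Finset

variable {ι α : Type*}

theorem biUnion_erase_eq_of_subset [DecidableEq ι] {I : ι → Set α} {s : Finset ι} {q : ι}
    (hq : q ∈ s) (h : I q ⊆ ⋃ i ∈ s.erase q, I i) : ⋃ i ∈ s.erase q, I i = ⋃ i ∈ s, I i := by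
  conv_rhs => rw [← insert_erase hq, set_biUnion_insert]
  exact (union_eq_right.mpr h).symm

theorem subset_biUnion_erase_of_subset_union [DecidableEq ι] {I : ι → Set α} {s : Finset ι}
    {p₁ p₂ q : ι} (hp₁ : p₁ ∈ s) (hp₂ : p₂ ∈ s) (h₁ : p₁ ≠ q) (h₂ : p₂ ≠ q)
    (h : I q ⊆ I p₁ ∪ I p₂) : I q ⊆ ⋃ i ∈ s.erase q, I i :=
  h.trans <| union_subset (subset_biUnion_of_mem (u := I) (mem_erase.2 ⟨h₁, hp₁⟩))
    (subset_biUnion_of_mem (u := I) (mem_erase.2 ⟨h₂, hp₂⟩))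

theorem Finset.exists_subset_biUnion_eq_forall_card_le_two (I : ι → Set α)
    (hI : ∀ i j k, (I i ∩ I j ∩ I k).Nonempty →
      I i ⊆ I j ∪ I k ∨ I j ⊆ I i ∪ I k ∨ I k ⊆ I i ∪ I j)
    (s : Finset ι) :
    ∃ t ⊆ s, ⋃ i ∈ t, I i = ⋃ i ∈ s, I i ∧ ∀ u ⊆ t, (⋂ i ∈ u, I i).Nonempty → #u ≤ 2 := by
  classical
  induction s using Finset.strongInduction with
  | _ s ih =>
    by_cases hmult : ∀ u ⊆ s, (⋂ i ∈ u, I i).Nonempty → #u ≤ 2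
    · exact ⟨s, subset_rfl, rfl, hmult⟩
    suffices ∃ q ∈ s, I q ⊆ ⋃ i ∈ s.erase q, I i by
      obtain ⟨q, hq, hsub⟩ := this
      obtain ⟨t, hts, htU, ht⟩ := ih _ (erase_ssubset hq)
      exact ⟨t, hts.trans (erase_subset q s), htU.trans (biUnion_erase_eq_of_subset hq hsub), ht⟩
    push Not at hmult
    obtain ⟨u, hus, ⟨x, hx⟩, hu⟩ := hmult
    obtain ⟨v, hvu, hv⟩ := exists_subset_card_eq (show 3 ≤ #u from hu)
    obtain ⟨i, j, k, hij, hik, hjk, rfl⟩ := card_eq_three.mp hv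
    have hmem : ∀ l ∈ ({i, j, k} : Finset ι), l ∈ s ∧ x ∈ I l := fun l hl =>
      ⟨hus (hvu hl), mem_iInter₂.mp hx l (hvu hl)⟩
    obtain ⟨⟨hi, hxi⟩, ⟨hj, hxj⟩, ⟨hk, hxk⟩⟩ := And.intro (hmem i (by simp))
      (And.intro (hmem j (by simp)) (hmem k (by simp)))
    rcases hI i j k ⟨x, ⟨hxi, hxj⟩, hxk⟩ with h | h | h
    · exact ⟨i, hi, subset_biUnion_erase_of_subset_union hj hk hij.symm hik.symm h⟩
    · exact ⟨j, hj, subset_biUnion_erase_of_subset_union hi hk hij hjk.symm h⟩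
    · exact ⟨k, hk, subset_biUnion_erase_of_subset_union hi hj hik hjk h⟩

theorem Finset.sum_measure_le_mul_measure_biUnion {_ : MeasurableSpace α} (μ : Measure α)
    {S : ι → Set α} {t : Finset ι} (hS : ∀ i ∈ t, MeasurableSet (S i)) {n : ℕ}
    (hmult : ∀ u ⊆ t, (⋂ i ∈ u, S i).Nonempty → #u ≤ n) :
    ∑ i ∈ t, μ (S i) ≤ n * μ (⋃ i ∈ t, S i) := by
  classical
  calc ∑ i ∈ t, μ (S i) = ∫⁻ x, ∑ i ∈ t, (S i).indicator 1 x ∂μ := by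
        rw [lintegral_finsetSum _ fun i hi => measurable_one.indicator (hS i hi)]
        exact sum_congr rfl fun i hi => (lintegral_indicator_one (hS i hi)).symm
    _ ≤ ∫⁻ x, (⋃ i ∈ t, S i).indicator (fun _ => (n : ℝ≥0∞)) x ∂μ := by
        refine lintegral_mono fun x => ?_
        by_cases hx : x ∈ ⋃ i ∈ t, S i
        · simp only [indicator_of_mem hx, indicator_apply, Pi.one_apply, sum_boole]
          exact_mod_cast hmult _ (filter_subset _ t)
            ⟨x, mem_iInter₂.mpr fun i hi => (mem_filter.mp hi).2⟩
        · rw [indicator_of_notMem hx, sum_eq_zero fun i hi => indicator_of_notMem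
            (fun h => hx (Set.mem_biUnion hi h)) _]
    _ = n * μ (⋃ i ∈ t, S i) := lintegral_indicator_const (t.measurableSet_biUnion hS) _

end Multiplicity

theorem Ioo_subset_union_Ioo_of_mem {a₁ b₁ a₂ b₂ a₃ b₃ x : ℝ}
    (h₁ : x ∈ Ioo a₁ b₁) (h₂ : x ∈ Ioo a₂ b₂) (h₃ : x ∈ Ioo a₃ b₃) :
    Ioo a₁ b₁ ⊆ Ioo a₂ b₂ ∪ Ioo a₃ b₃ ∨ Ioo a₂ b₂ ⊆ Ioo a₁ b₁ ∪ Ioo a₃ b₃ ∨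
      Ioo a₃ b₃ ⊆ Ioo a₁ b₁ ∪ Ioo a₂ b₂ := by
  obtain ⟨⟨ha₁, hb₁⟩, ⟨ha₂, hb₂⟩, ⟨ha₃, hb₃⟩⟩ := And.intro h₁ (And.intro h₂ h₃)
  rw [Ioo_union_Ioo' (by linarith) (by linarith), Ioo_union_Ioo' (by linarith) (by linarith),
    Ioo_union_Ioo' (by linarith) (by linarith)]
  -- An interval that is not covered by the other two has the strictly least left or the strictly
  -- greatest right endpoint, and each of these is attained by at most one of the three.
  by_contra! h
  simp only [Ioo_subset_Ioo_iff (ha₁.trans hb₁), Ioo_subset_Ioo_iff (ha₂.trans hb₂),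
    Ioo_subset_Ioo_iff (ha₃.trans hb₃), min_le_iff, le_max_iff, not_and_or, not_or, not_le] at h
  obtain ⟨⟨_, _⟩ | ⟨_, _⟩, ⟨_, _⟩ | ⟨_, _⟩, ⟨_, _⟩ | ⟨_, _⟩⟩ := h <;> linarith

open Finset in
theorem measure_iUnion_Ioo_le {ι : Type*} (μ : Measure ℝ) [IsLocallyFiniteMeasure μ] {E : Set ℝ}
    (hE : MeasurableSet E) {c : ℝ≥0∞} (a b : ι → ℝ)
    (h : ∀ i, μ (Ioo (a i) (b i) \ E) ≤ c * μ (Ioo (a i) (b i) ∩ E)) :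
    μ (⋃ i, Ioo (a i) (b i)) ≤ (1 + 2 * c) * μ E := by
  rw [(isOpen_iUnion fun i => isOpen_Ioo).measure_eq_iSup_isCompact]
  refine iSup₂_le fun K hKU => iSup_le fun hK => ?_
  obtain ⟨s, hs⟩ := hK.elim_finite_subcover _ (fun i => isOpen_Ioo) hKU
  obtain ⟨t, -, hts, hmult⟩ := exists_subset_biUnion_eq_forall_card_le_two
    (fun i => Ioo (a i) (b i))
    (fun i j k ⟨x, ⟨hi, hj⟩, hk⟩ => Ioo_subset_union_Ioo_of_mem hi hj hk) s
  calc μ K ≤ μ (K ∩ E) + μ (K \ E) := measure_le_inter_add_sdiff μ K E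
    _ ≤ μ E + ∑ i ∈ t, μ (Ioo (a i) (b i) \ E) := by
        gcongr
        · exact inter_subset_right
        · refine (measure_mono ?_).trans (measure_biUnion_finset_le t _)
          simp only [← iUnion_sdiff, hts]
          exact sdiff_subset_sdiff_left hs
    _ ≤ μ E + c * ∑ i ∈ t, μ (Ioo (a i) (b i) ∩ E) := by
        rw [mul_sum]
        gcongr with i
        exact h i
    _ ≤ μ E + c * (2 * μ E) := by
        gcongr
        refine (sum_measure_le_mul_measure_biUnion μ (fun i _ => measurableSet_Ioo.inter hE)
          fun u hu hne => hmult u hu (hne.mono (iInter₂_mono fun i _ => inter_subset_left))).trans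
          ?_
        rw [Nat.cast_ofNat]
        gcongr
        exact iUnion₂_subset fun i _ => Set.inter_subset_right
    _ = (1 + 2 * c) * μ E := by ring

theorem exists_lt_average_of_lt_Mmu {μ : Measure ℝ} {f : ℝ → ℝ} {x α : ℝ} (hα : 0 ≤ α)
    (h : α < Mmu μ f x) :
    ∃ a b, x ∈ Ioo a b ∧ α < (μ.real (Ioo a b))⁻¹ * ∫ y in Ioo a b, |f y| ∂μ := by
  have hne : {r : ℝ | ∃ a b : ℝ, a < b ∧ x ∈ Ioo a b ∧ 0 < μ (Ioo a b) ∧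
      r = (μ (Ioo a b)).toReal⁻¹ * ∫ y in Ioo a b, |f y| ∂μ}.Nonempty := by
    by_contra hempty
    rw [Mmu, not_nonempty_iff_eq_empty.mp hempty, Real.sSup_empty] at h
    linarith
  obtain ⟨_, ⟨a, b, -, hx, -, rfl⟩, hlt⟩ := exists_lt_of_lt_csSup hne h
  exact ⟨a, b, hx, hlt⟩

theorem setIntegral_abs_indicator_add_mul_indicator_compl {μ : Measure ℝ} {E I : Set ℝ}
    (hE : MeasurableSet E) (hI : μ I ≠ ⊤) {γ : ℝ} (hγ : 0 ≤ γ) :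
    ∫ y in I, |E.indicator 1 y + γ * Eᶜ.indicator 1 y| ∂μ =
      μ.real (E ∩ I) + γ * μ.real (Eᶜ ∩ I) := by
  have : Fact (μ I < ⊤) := ⟨hI.lt_top⟩
  have hint : ∀ {S : Set ℝ}, MeasurableSet S →
      Integrable (S.indicator (1 : ℝ → ℝ)) (μ.restrict I) :=
    fun hS => (integrable_const 1).indicator hS
  have hnonneg : ∀ y, 0 ≤ E.indicator 1 y + γ * Eᶜ.indicator (1 : ℝ → ℝ) y := fun y =>
    add_nonneg (indicator_nonneg (fun _ _ => zero_le_one) y)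
      (mul_nonneg hγ (indicator_nonneg (fun _ _ => zero_le_one) y))
  simp_rw [abs_of_nonneg (hnonneg _)]
  rw [integral_add (hint hE) ((hint hE.compl).const_mul γ), integral_const_mul,
    integral_indicator_one hE, integral_indicator_one hE.compl, measureReal_restrict_apply hE,
    measureReal_restrict_apply hE.compl]

theorem measure_sdiff_le_of_lt_average {μ : Measure ℝ} {E I : Set ℝ} (hE : MeasurableSet E)
    {α γ : ℝ} (hγ : 0 ≤ γ) (hγα : γ < α)
    (h : α < (μ.real I)⁻¹ * ∫ y in I, |E.indicator 1 y + γ * Eᶜ.indicator 1 y| ∂μ) :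
    μ (I \ E) ≤ ENNReal.ofReal ((1 - α) / (α - γ)) * μ (I ∩ E) := by
  have hpos : 0 < μ.real I := by
    refine measureReal_nonneg.lt_of_ne fun hzero => ?_
    rw [← hzero, inv_zero, zero_mul] at h
    linarith
  have hfin : μ I ≠ ⊤ := fun htop => by simp [measureReal_def, htop] at hpos
  rw [setIntegral_abs_indicator_add_mul_indicator_compl hE hfin hγ, lt_inv_mul_iff₀ hpos,
    ← measureReal_inter_add_sdiff (s := I) hE hfin, inter_comm E, ← sdiff_eq_compl_inter] at h
  have hreal : μ.real (I \ E) ≤ (1 - α) / (α - γ) * μ.real (I ∩ E) := by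
    rw [div_mul_eq_mul_div, le_div_iff₀ (by linarith)]
    nlinarith
  rw [← ofReal_measureReal (measure_ne_top_of_subset sdiff_subset hfin),
    ← ofReal_measureReal (measure_ne_top_of_subset inter_subset_left hfin),
    ← ENNReal.ofReal_mul' measureReal_nonneg]
  exact ENNReal.ofReal_le_ofReal hreal

theorem stmt2_general (μ : Measure ℝ) [IsLocallyFiniteMeasure μ]
    (E : Set ℝ) (hE : MeasurableSet E)
    (α γ : ℝ) (hγ : 0 ≤ γ) (hγα : γ < α) (hα : α < 1) :
    μ {x | α < Mmu μ (fun y => E.indicator 1 y + γ * Eᶜ.indicator 1 y) x} ≤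
      ENNReal.ofReal (1 + 2 * (1 - α) / (α - γ)) * μ E := by
  set c := (1 - α) / (α - γ)
  have hc : 0 ≤ c := div_nonneg (sub_nonneg.2 hα.le) (sub_nonneg.2 hγα.le)
  let good := {p : ℝ × ℝ | μ (Ioo p.1 p.2 \ E) ≤ ENNReal.ofReal c * μ (Ioo p.1 p.2 ∩ E)}
  have hsub : {x | α < Mmu μ (fun y => E.indicator 1 y + γ * Eᶜ.indicator 1 y) x} ⊆
      ⋃ p : good, Ioo p.1.1 p.1.2 := by
    intro x hx
    obtain ⟨a, b, hx, hlt⟩ := exists_lt_average_of_lt_Mmu (hγ.trans hγα.le) hx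
    exact mem_iUnion.2 ⟨⟨(a, b), measure_sdiff_le_of_lt_average hE hγ hγα hlt⟩, hx⟩
  calc _ ≤ μ (⋃ p : good, Ioo p.1.1 p.1.2) := measure_mono hsub
    _ ≤ (1 + 2 * ENNReal.ofReal c) * μ E := measure_iUnion_Ioo_le μ hE _ _ fun p => p.2
    _ = ENNReal.ofReal (1 + 2 * (1 - α) / (α - γ)) * μ E := by
      rw [mul_div_assoc, ENNReal.ofReal_add zero_le_one (mul_nonneg zero_le_two hc),
        ENNReal.ofReal_one, ENNReal.ofReal_mul zero_le_two, ENNReal.ofReal_ofNat]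

/-- one-dimensional Solyanik estimate with respect to a Borel measure. -/
theorem stmt2 (μ : Measure ℝ) [IsLocallyFiniteMeasure μ]
    (E : Set ℝ) (hE : MeasurableSet E) (h0 : 0 < μ E) (h1 : μ E < ⊤)
    (α γ : ℝ) (hγ : 0 ≤ γ) (hγα : γ < α) (hα : α < 1) :
    μ {x | α < Mmu μ (fun y => E.indicator 1 y + γ * Eᶜ.indicator 1 y) x} ≤
      ENNReal.ofReal (1 + 2 * (1 - α) / (α - γ)) * μ E :=
  stmt2_general μ E hE α γ hγ hγα hα
end

section
/- Let μ be a non-negative locally finite Borel measure on ℝ. Define, for α ∈ (0,1), the sharp Tauberian constant C^μ(α) := sup over measurable E ⊆ ℝ with 0 < μ(E) < ∞ of μ({x : M^μ(1_E)(x) > α})/μ(E), where M^μ is the uncentered Hardy–Littlewood maximal operator with respect to μ. Then C^μ(α) - 1 ≤ 2(1-α)/α for all α ∈ (0,1). -/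
open MeasureTheory Set
open scoped ENNReal NNReal

/-- The sharp Tauberian constant of `Mmu`. -/
noncomputable def Cmu (μ : Measure ℝ) (α : ℝ) : ℝ≥0∞ :=
  ⨆ (E : Set ℝ) (_ : MeasurableSet E) (_ : 0 < μ E) (_ : μ E < ⊤),
    μ {x | α < Mmu μ (E.indicator 1) x} / μ E

/-!
Every point of `{x | α < M^μ 1_E x}` lies in an open interval `I` with
`μ (I \ E) ≤ (1 - α) / α * μ (I ∩ E)`. By inner regularity it suffices to bound finite unions of
such intervals. A finite family of intervals has a subfamily with the same union that covers each
point at most twice, so the parts of its intervals outside `E` have total measure at most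
`2 (1 - α) / α * μ E`.
-/

open scoped Finset

theorem sum_measure_le_mul_measure_univ {X ι : Type*} [MeasurableSpace X] (μ : Measure X)
    {t : Finset ι} {A : ι → Set X} [∀ i, DecidablePred (· ∈ A i)]
    (hA : ∀ i ∈ t, MeasurableSet (A i)) {N : ℕ} (hN : ∀ x, #{i ∈ t | x ∈ A i} ≤ N) :
    ∑ i ∈ t, μ (A i) ≤ N * μ univ := by
  calc ∑ i ∈ t, μ (A i) = ∫⁻ x, ∑ i ∈ t, (A i).indicator 1 x ∂μ := by
        rw [lintegral_finsetSum _ fun i hi => measurable_one.indicator (hA i hi)]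
        exact Finset.sum_congr rfl fun i hi => (lintegral_indicator_one (hA i hi)).symm
    _ ≤ ∫⁻ _, (N : ℝ≥0∞) ∂μ := by
        refine lintegral_mono fun x => ?_
        rw [Finset.sum_indicator_eq_sum_filter]
        simpa using hN x
    _ = N * μ univ := lintegral_const _

theorem Ioo_subset_union_of_mem {a b c d e f x : ℝ} (hca : c ≤ a) (hbf : b ≤ f)
    (hx₁ : x ∈ Ioo c d) (hx₂ : x ∈ Ioo e f) :
    Ioo a b ⊆ Ioo c d ∪ Ioo e f := by
  intro y hy
  rcases le_or_gt y x with h | h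
  · exact Or.inl ⟨hca.trans_lt hy.1, h.trans_lt hx₁.2⟩
  · exact Or.inr ⟨hx₂.1.trans h, hy.2.trans_le hbf⟩

/-- Of three intervals through a common point, one reaching furthest left together with one
reaching furthest right covers the remaining one. -/
theorem exists_Ioo_subset_union_of_mem {p q r : ℝ × ℝ} {x : ℝ}
    (hp : x ∈ Ioo p.1 p.2) (hq : x ∈ Ioo q.1 q.2) (hr : x ∈ Ioo r.1 r.2) :
    Ioo p.1 p.2 ⊆ Ioo q.1 q.2 ∪ Ioo r.1 r.2 ∨
    Ioo q.1 q.2 ⊆ Ioo p.1 p.2 ∪ Ioo r.1 r.2 ∨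
    Ioo r.1 r.2 ⊆ Ioo p.1 p.2 ∪ Ioo q.1 q.2 := by
  rcases le_total p.1 q.1 with h₁ | h₁ <;> rcases le_total p.1 r.1 with h₂ | h₂ <;>
    rcases le_total q.1 r.1 with h₃ | h₃ <;> rcases le_total p.2 q.2 with h₄ | h₄ <;>
    rcases le_total p.2 r.2 with h₅ | h₅ <;> rcases le_total q.2 r.2 with h₆ | h₆ <;>
    first
    | exact Or.inl (Ioo_subset_union_of_mem (by linarith) (by linarith) hq hr)
    | exact Or.inl (union_comm _ _ ▸ Ioo_subset_union_of_mem (by linarith) (by linarith) hr hq)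
    | exact Or.inr (Or.inl (Ioo_subset_union_of_mem (by linarith) (by linarith) hp hr))
    | exact Or.inr (Or.inl
        (union_comm _ _ ▸ Ioo_subset_union_of_mem (by linarith) (by linarith) hr hp))
    | exact Or.inr (Or.inr (Ioo_subset_union_of_mem (by linarith) (by linarith) hp hq))
    | exact Or.inr (Or.inr
        (union_comm _ _ ▸ Ioo_subset_union_of_mem (by linarith) (by linarith) hq hp))

theorem exists_subset_biUnion_Ioo_eq_of_card_le_two (s : Finset (ℝ × ℝ)) :
    ∃ t ⊆ s, ⋃ p ∈ t, Ioo p.1 p.2 = ⋃ p ∈ s, Ioo p.1 p.2 ∧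
      ∀ x, #{p ∈ t | x ∈ Ioo p.1 p.2} ≤ 2 := by
  induction s using Finset.strongInduction with
  | H s ih =>
  by_cases hs : ∀ x, #{p ∈ s | x ∈ Ioo p.1 p.2} ≤ 2
  · exact ⟨s, subset_rfl, rfl, hs⟩
  obtain ⟨x, hx⟩ := not_forall.1 hs
  obtain ⟨p, hp, q, hq, r, hr, hpq, hpr, hqr⟩ := Finset.two_lt_card.1 (not_le.1 hx)
  simp only [Finset.mem_filter] at hp hq hr
  have redundant : ∀ {k i j}, k ∈ s → i ∈ s → j ∈ s → i ≠ k → j ≠ k →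
      Ioo k.1 k.2 ⊆ Ioo i.1 i.2 ∪ Ioo j.1 j.2 →
      ∃ k ∈ s, Ioo k.1 k.2 ⊆ ⋃ i ∈ s.erase k, Ioo i.1 i.2 :=
    fun hk hi hj hik hjk hsub => ⟨_, hk, hsub.trans (union_subset
      (Finset.subset_set_biUnion_of_mem (f := fun p : ℝ × ℝ => Ioo p.1 p.2)
        (Finset.mem_erase.2 ⟨hik, hi⟩))
      (Finset.subset_set_biUnion_of_mem (f := fun p : ℝ × ℝ => Ioo p.1 p.2)
        (Finset.mem_erase.2 ⟨hjk, hj⟩)))⟩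
  obtain ⟨k, hk, hsub⟩ : ∃ k ∈ s, Ioo k.1 k.2 ⊆ ⋃ i ∈ s.erase k, Ioo i.1 i.2 := by
    rcases exists_Ioo_subset_union_of_mem hp.2 hq.2 hr.2 with h | h | h
    · exact redundant hp.1 hq.1 hr.1 hpq.symm hpr.symm h
    · exact redundant hq.1 hp.1 hr.1 hpq hqr.symm h
    · exact redundant hr.1 hp.1 hq.1 hpr hqr h
  obtain ⟨t, hts, hunion, hcard⟩ := ih _ (Finset.erase_ssubset hk)
  refine ⟨t, hts.trans (Finset.erase_subset _ _), ?_, hcard⟩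
  rw [hunion]
  conv_rhs => rw [← Finset.insert_erase hk, Finset.set_biUnion_insert,
    union_eq_self_of_subset_left hsub]

theorem exists_Ioo_lt_average_of_lt_Mmu {μ : Measure ℝ} {f : ℝ → ℝ} {x r : ℝ} (hr : 0 ≤ r)
    (h : r < Mmu μ f x) :
    ∃ a b, x ∈ Ioo a b ∧ 0 < μ (Ioo a b) ∧
      r < (μ (Ioo a b)).toReal⁻¹ * ∫ y in Ioo a b, |f y| ∂μ := by
  -- `0 ≤ r` also covers the junk value `sSup s = 0` of an unbounded or empty set of averages.
  by_contra! hle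
  exact h.not_ge (Real.sSup_le (by rintro _ ⟨a, b, -, hx, hpos, rfl⟩; exact hle a b hx hpos) hr)

theorem setIntegral_abs_indicator_one {X : Type*} [MeasurableSpace X] (μ : Measure X)
    {E : Set X} (hE : MeasurableSet E) (s : Set X) :
    ∫ y in s, |E.indicator (1 : X → ℝ) y| ∂μ = μ.real (s ∩ E) := by
  have habs : ∀ y, |E.indicator (1 : X → ℝ) y| = E.indicator 1 y :=
    fun y => abs_of_nonneg (indicator_nonneg (fun _ _ => zero_le_one) y)
  rw [integral_congr_ae (ae_of_all _ habs), integral_indicator_one hE,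
    measureReal_restrict_apply hE, inter_comm]

theorem measure_diff_le_of_mul_le {X : Type*} [MeasurableSpace X] {μ : Measure X}
    {I E : Set X} (hI : μ I ≠ ∞) (hE : MeasurableSet E) {α : ℝ} (hα : 0 < α)
    (h : α * μ.real I ≤ μ.real (I ∩ E)) :
    μ (I \ E) ≤ ENNReal.ofReal ((1 - α) / α) * μ (I ∩ E) := by
  have hsplit : μ.real (I ∩ E) + μ.real (I \ E) = μ.real I := measureReal_inter_add_sdiff hE hI
  have hreal : μ.real (I \ E) ≤ (1 - α) / α * μ.real (I ∩ E) := by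
    rw [div_mul_eq_mul_div, le_div_iff₀ hα]
    nlinarith
  rw [← ofReal_measureReal (measure_ne_top_of_subset sdiff_subset hI),
    ← ofReal_measureReal (measure_ne_top_of_subset inter_subset_left hI),
    ← ENNReal.ofReal_mul' measureReal_nonneg]
  exact ENNReal.ofReal_le_ofReal hreal

theorem measure_biUnion_Ioo_le {μ : Measure ℝ} {E : Set ℝ} {c : ℝ≥0∞}
    (s : Finset (ℝ × ℝ)) (hs : ∀ p ∈ s, μ (Ioo p.1 p.2 \ E) ≤ c * μ (Ioo p.1 p.2 ∩ E)) :
    μ (⋃ p ∈ s, Ioo p.1 p.2) ≤ (1 + 2 * c) * μ E := by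
  obtain ⟨t, hts, hunion, hcard⟩ := exists_subset_biUnion_Ioo_eq_of_card_le_two s
  have hoverlap : ∑ p ∈ t, μ (Ioo p.1 p.2 ∩ E) ≤ 2 * μ E := by
    simpa [Measure.restrict_apply measurableSet_Ioo] using
      sum_measure_le_mul_measure_univ (μ.restrict E) (fun p _ => measurableSet_Ioo) hcard
  rw [← hunion]
  calc μ (⋃ p ∈ t, Ioo p.1 p.2)
      ≤ μ ((⋃ p ∈ t, Ioo p.1 p.2) ∩ E) + μ ((⋃ p ∈ t, Ioo p.1 p.2) \ E) :=
        measure_le_inter_add_sdiff μ _ E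
    _ ≤ μ E + ∑ p ∈ t, μ (Ioo p.1 p.2 \ E) := by
        simp_rw [iUnion_sdiff]
        exact add_le_add (measure_mono inter_subset_right) (measure_biUnion_finset_le t _)
    _ ≤ μ E + c * ∑ p ∈ t, μ (Ioo p.1 p.2 ∩ E) := by
        rw [Finset.mul_sum]
        gcongr with p hp
        exact hs p (hts hp)
    _ ≤ μ E + c * (2 * μ E) := by gcongr
    _ = (1 + 2 * c) * μ E := by ring

theorem measure_lt_Mmu_indicator_le (μ : Measure ℝ) [IsLocallyFiniteMeasure μ] {E : Set ℝ}
    (hE : MeasurableSet E) {α : ℝ} (hα : 0 < α) :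
    μ {x | α < Mmu μ (E.indicator 1) x} ≤ (1 + 2 * ENNReal.ofReal ((1 - α) / α)) * μ E := by
  set c := ENNReal.ofReal ((1 - α) / α)
  set good := {p : ℝ × ℝ | μ (Ioo p.1 p.2 \ E) ≤ c * μ (Ioo p.1 p.2 ∩ E)}
  have hcover : {x | α < Mmu μ (E.indicator 1) x} ⊆ ⋃ p ∈ good, Ioo p.1 p.2 := by
    intro x hx
    obtain ⟨a, b, hxab, hpos, hlt⟩ := exists_Ioo_lt_average_of_lt_Mmu hα.le hx
    rw [setIntegral_abs_indicator_one μ hE, lt_inv_mul_iff₀ (ENNReal.toReal_pos hpos.ne'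
      measure_Ioo_lt_top.ne)] at hlt
    exact mem_biUnion (x := (a, b))
      (measure_diff_le_of_mul_le measure_Ioo_lt_top.ne hE hα (by rw [mul_comm]; exact hlt.le))
      hxab
  calc μ {x | α < Mmu μ (E.indicator 1) x} ≤ μ (⋃ p ∈ good, Ioo p.1 p.2) := measure_mono hcover
    _ = ⨆ (K : Set ℝ) (_ : K ⊆ ⋃ p ∈ good, Ioo p.1 p.2) (_ : IsCompact K), μ K :=
        (isOpen_biUnion fun _ _ => isOpen_Ioo).measure_eq_iSup_isCompact μ
    _ ≤ (1 + 2 * c) * μ E := by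
        refine iSup₂_le fun K hKV => iSup_le fun hK => ?_
        obtain ⟨s, hsgood, hsfin, hKs⟩ :=
          hK.elim_finite_subcover_image (fun _ _ => isOpen_Ioo) hKV
        calc μ K ≤ μ (⋃ p ∈ hsfin.toFinset, Ioo p.1 p.2) := measure_mono (by simpa using hKs)
          _ ≤ (1 + 2 * c) * μ E :=
            measure_biUnion_Ioo_le _ fun p hp => hsgood (hsfin.mem_toFinset.1 hp)

theorem stmt3_general (μ : Measure ℝ) [IsLocallyFiniteMeasure μ]
    (α : ℝ) (hα0 : 0 < α) :
    Cmu μ α - 1 ≤ ENNReal.ofReal (2 * (1 - α) / α) := by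
  rw [tsub_le_iff_left, mul_div_assoc, ENNReal.ofReal_mul zero_le_two, ENNReal.ofReal_ofNat, Cmu]
  exact iSup_le fun E => iSup_le fun hE => iSup₂_le fun _ _ =>
    ENNReal.div_le_of_le_mul (measure_lt_Mmu_indicator_le μ hE hα0)

/-- Solyanik estimate for the Tauberian constant with respect to a
locally finite Borel measure. -/
theorem stmt3 (μ : Measure ℝ) [IsLocallyFiniteMeasure μ]
    (α : ℝ) (hα0 : 0 < α) (hα1 : α < 1) :
    Cmu μ α - 1 ≤ ENNReal.ofReal (2 * (1 - α) / α) :=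
  stmt3_general μ α hα0
end

section
/- Let w be a weight on ℝ, let M denote the uncentered Hardy–Littlewood maximal operator on ℝ, and suppose that for every bounded interval I and every measurable E ⊆ I we have w(E)/w(I) ≤ 2 (|E|/|I|)^{1/β} for some β ≥ 1. Let E ⊆ ℝ be measurable with 0 < |E| < ∞ and let 0 ≤ γ < α < 1 satisfy (1-α)/(1-γ) < 4^{-β}. Then w({x ∈ ℝ : M(1_E + γ·1_{E^c})(x) > α}) ≤ (1 - 4((1-α)/(1-γ))^{1/β})^{-1} · w(E). -/
open MeasureTheory Set
open scoped ENNReal NNReal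

/-- The uncentered one-dimensional Hardy–Littlewood maximal operator (Lebesgue measure). -/
noncomputable def MHL (f : ℝ → ℝ) (x : ℝ) : ℝ :=
  sSup {r : ℝ | ∃ a b : ℝ, a < b ∧ x ∈ Set.Ioo a b ∧
    r = (b - a)⁻¹ * ∫ y in Set.Ioo a b, |f y|}

/-!
Put `ρ = (1 - α) / (1 - γ)` and `f = 1_E + γ 1_{Eᶜ}`. The average of `f` over an interval `I`
is `1 - (1 - γ) |I \ E| / |I|`, so it exceeds `α` exactly when `|I \ E| < ρ |I|`: every point
of `G = {M f > α}` lies in an interval `I ⊆ G` on which `E` has relative density at least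
`1 - ρ`. A finite irredundant family of intervals covers each point at most twice, so every
compact subset of an open set built from such intervals is covered by a finite union `U` of
them with `|U \ E| ≤ 2ρ |U|`. By inner regularity, `|G| ≤ (1 - 2ρ)⁻¹ |E| < ∞`, hence the
components of `G` are bounded open intervals `J`, each with `|J \ E| ≤ 2ρ |J|`. The absorption
hypothesis then gives `w(J \ E) ≤ 2 (2ρ)^{1/β} w(J) ≤ 4 ρ^{1/β} w(J)`, that is
`w(J) ≤ (1 - 4 ρ^{1/β})⁻¹ w(J ∩ E)`, and summing over the countably many components finishes.
-/

open Bornology TopologicalSpace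
open scoped Finset Topology

theorem Set.Ioo_subset_union_Ioo_of_mem {x a b a' b' c d : ℝ} (hx : x ∈ Ioo a b)
    (hx' : x ∈ Ioo a' b') (hc : a ≤ c) (hd : d ≤ b') : Ioo c d ⊆ Ioo a b ∪ Ioo a' b' := by
  intro y hy
  rcases le_or_gt y x with hyx | hxy
  · exact Or.inl ⟨hc.trans_lt hy.1, hyx.trans_lt hx.2⟩
  · exact Or.inr ⟨hx'.1.trans hxy, hy.2.trans_le hd⟩

theorem Finset.exists_subset_biUnion_eq_irredundant {ι X : Type*} [DecidableEq ι]
    (U : ι → Set X) (F : Finset ι) :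
    ∃ F' ⊆ F, ⋃ i ∈ F', U i = ⋃ i ∈ F, U i ∧ ∀ i ∈ F', ¬ U i ⊆ ⋃ j ∈ F'.erase i, U j := by
  obtain ⟨F', hF'F, hmin⟩ := exists_minimal_le_of_wellFoundedLT
    (fun G : Finset ι ↦ ⋃ i ∈ G, U i = ⋃ i ∈ F, U i) F rfl
  refine ⟨F', hF'F, hmin.prop, fun i hi hsub ↦ hmin.not_lt ?_ (Finset.erase_ssubset hi)⟩
  calc ⋃ j ∈ F'.erase i, U j = U i ∪ ⋃ j ∈ F'.erase i, U j := (Set.union_eq_right.2 hsub).symm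
    _ = ⋃ j ∈ F, U j := by rw [← Finset.set_biUnion_insert, Finset.insert_erase hi, hmin.prop]

/-- Of three intervals through `x`, the one that neither starts first nor ends last lies in the
union of the two that do. -/
theorem card_le_two_of_forall_mem_Ioo {ι : Type*} [DecidableEq ι] {a b : ι → ℝ} {F : Finset ι}
    (hF : ∀ i ∈ F, ¬ Ioo (a i) (b i) ⊆ ⋃ j ∈ F.erase i, Ioo (a j) (b j)) {x : ℝ} {T : Finset ι}
    (hTF : T ⊆ F) (hT : ∀ i ∈ T, x ∈ Ioo (a i) (b i)) : #T ≤ 2 := by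
  by_contra! hT2
  obtain ⟨i, hi, hmin⟩ := T.exists_min_image a (Finset.card_pos.1 (by omega))
  obtain ⟨j, hj, hmax⟩ := T.exists_max_image b (Finset.card_pos.1 (by omega))
  obtain ⟨k, hk⟩ := Finset.card_pos.1 (show 0 < #(T \ {i, j}) by
    grind [T.card_le_card_sdiff_add_card (t := {i, j}), Finset.card_le_two])
  simp only [Finset.mem_sdiff, Finset.mem_insert, Finset.mem_singleton, not_or] at hk
  have hsub {l} (hl : l ∈ T) (hlk : l ≠ k) : Ioo (a l) (b l) ⊆ ⋃ j ∈ F.erase k, Ioo (a j) (b j) :=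
    subset_biUnion_of_mem (u := fun j ↦ Ioo (a j) (b j)) (Finset.mem_erase.2 ⟨hlk, hTF hl⟩)
  exact hF k (hTF hk.1) ((Ioo_subset_union_Ioo_of_mem (hT i hi) (hT j hj) (hmin k hk.1)
    (hmax k hk.1)).trans (union_subset (hsub hi (Ne.symm hk.2.1)) (hsub hj (Ne.symm hk.2.2))))

theorem MeasureTheory.sum_measure_le_mul_measure_biUnion {X ι : Type*} [MeasurableSpace X]
    (μ : Measure X) {s : ι → Set X} {F : Finset ι} (hs : ∀ i ∈ F, MeasurableSet (s i)) {n : ℕ}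
    (hn : ∀ x, ∀ T ⊆ F, (∀ i ∈ T, x ∈ s i) → #T ≤ n) :
    ∑ i ∈ F, μ (s i) ≤ n * μ (⋃ i ∈ F, s i) := by
  classical
  have hU : MeasurableSet (⋃ i ∈ F, s i) := .biUnion F.countable_toSet hs
  calc ∑ i ∈ F, μ (s i) = ∫⁻ x, ∑ i ∈ F, (s i).indicator 1 x ∂μ := by
        rw [lintegral_finsetSum' F (f := fun i ↦ (s i).indicator 1)
          fun i hi ↦ (measurable_one.indicator (hs i hi)).aemeasurable]
        exact Finset.sum_congr rfl fun i hi ↦ (lintegral_indicator_one (hs i hi)).symm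
    _ ≤ ∫⁻ x, n * (⋃ i ∈ F, s i).indicator 1 x ∂μ := by
        refine lintegral_mono fun x ↦ ?_
        by_cases hx : x ∈ ⋃ i ∈ F, s i
        · simp only [indicator_apply, Pi.one_apply, Finset.sum_boole, hx, if_true, mul_one]
          exact_mod_cast hn x _ (Finset.filter_subset _ F) fun i hi ↦ (Finset.mem_filter.1 hi).2
        · rw [indicator_of_notMem hx, mul_zero, Finset.sum_eq_zero fun i hi ↦
            indicator_of_notMem (fun h ↦ hx (mem_biUnion hi h)) _]
    _ = n * μ (⋃ i ∈ F, s i) := by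
        rw [lintegral_const_mul' _ _ (by simp), lintegral_indicator_one hU]

theorem ENNReal.le_inv_one_sub_mul_of_le_add_mul {x y c : ℝ≥0∞} (hx : x ≠ ∞) (hc : c < 1)
    (h : x ≤ y + c * x) : x ≤ (1 - c)⁻¹ * y := by
  rw [← ENNReal.div_eq_inv_mul, ENNReal.le_div_iff_mul_le (.inl (tsub_pos_of_lt hc).ne')
    (.inl (ENNReal.sub_ne_top ENNReal.one_ne_top)), mul_comm,
    ENNReal.sub_mul fun _ _ ↦ hx, one_mul]
  exact tsub_le_iff_right.2 h

def CoveredByDenseIntervals (μ : Measure ℝ) (E : Set ℝ) (c : ℝ≥0∞) (G : Set ℝ) : Prop :=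
  ∀ y ∈ G, ∃ a b, y ∈ Ioo a b ∧ Ioo a b ⊆ G ∧ μ (Ioo a b \ E) ≤ c * μ (Ioo a b)

namespace CoveredByDenseIntervals

variable {μ : Measure ℝ} {E G : Set ℝ} {c : ℝ≥0∞}

protected theorem isOpen (hG : CoveredByDenseIntervals μ E c G) : IsOpen G :=
  isOpen_iff_forall_mem_open.2 fun y hy ↦
    let ⟨_, _, hy, hsub, _⟩ := hG y hy
    ⟨_, hsub, isOpen_Ioo, hy⟩

protected theorem connectedComponentIn (hG : CoveredByDenseIntervals μ E c G) (x : ℝ) :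
    CoveredByDenseIntervals μ E c (connectedComponentIn G x) := by
  intro y hy
  obtain ⟨a, b, hya, hsub, hdense⟩ := hG y (connectedComponentIn_subset G x hy)
  refine ⟨a, b, hya, ?_, hdense⟩
  rw [connectedComponentIn_eq hy]
  exact isPreconnected_Ioo.subset_connectedComponentIn hya hsub

theorem exists_superset_measure_diff_le (hG : CoveredByDenseIntervals μ E c G) {K : Set ℝ}
    (hK : IsCompact K) (hKG : K ⊆ G) :
    ∃ U ⊆ G, K ⊆ U ∧ IsBounded U ∧ μ (U \ E) ≤ 2 * c * μ U := by
  classical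
  choose! a b hab hsub hdense using hG
  obtain ⟨t, htK, hKt⟩ := hK.elim_nhds_subcover (fun y ↦ Ioo (a y) (b y))
    fun y hy ↦ isOpen_Ioo.mem_nhds (hab y (hKG hy))
  obtain ⟨F, hFt, hFU, hirr⟩ := t.exists_subset_biUnion_eq_irredundant fun y ↦ Ioo (a y) (b y)
  refine ⟨⋃ y ∈ F, Ioo (a y) (b y), iUnion₂_subset fun y hy ↦ hsub y (hKG (htK y (hFt hy))),
    hFU ▸ hKt, (isBounded_biUnion_finset F).2 fun _ _ ↦ Metric.isBounded_Ioo _ _, ?_⟩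
  calc μ ((⋃ y ∈ F, Ioo (a y) (b y)) \ E) ≤ ∑ y ∈ F, μ (Ioo (a y) (b y) \ E) := by
        simp only [iUnion_sdiff]
        exact measure_biUnion_finset_le F _
    _ ≤ ∑ y ∈ F, c * μ (Ioo (a y) (b y)) :=
        Finset.sum_le_sum fun y hy ↦ hdense y (hKG (htK y (hFt hy)))
    _ ≤ c * (2 * μ (⋃ y ∈ F, Ioo (a y) (b y))) := by
        rw [← Finset.mul_sum]
        gcongr
        exact_mod_cast sum_measure_le_mul_measure_biUnion μ (fun _ _ ↦ measurableSet_Ioo)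
          fun x T hTF hT ↦ card_le_two_of_forall_mem_Ioo hirr hTF hT
    _ = 2 * c * μ (⋃ y ∈ F, Ioo (a y) (b y)) := by ring

theorem measure_diff_le [μ.InnerRegular] (hG : CoveredByDenseIntervals μ E c G)
    (hE : MeasurableSet E) : μ (G \ E) ≤ 2 * c * μ G := by
  rw [(hG.isOpen.measurableSet.diff hE).measure_eq_iSup_isCompact]
  refine iSup₂_le fun K hK ↦ iSup_le fun hKc ↦ ?_
  obtain ⟨U, hUG, hKU, -, hU⟩ := hG.exists_superset_measure_diff_le hKc (hK.trans sdiff_subset)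
  calc μ K ≤ μ (U \ E) := measure_mono fun y hy ↦ ⟨hKU hy, (hK hy).2⟩
    _ ≤ 2 * c * μ U := hU
    _ ≤ 2 * c * μ G := by gcongr

theorem measure_le [IsLocallyFiniteMeasure μ]
    (hG : CoveredByDenseIntervals μ E c G) (hc : 2 * c < 1) : μ G ≤ (1 - 2 * c)⁻¹ * μ E := by
  rw [hG.isOpen.measurableSet.measure_eq_iSup_isCompact]
  refine iSup₂_le fun K hK ↦ iSup_le fun hKc ↦ ?_
  obtain ⟨U, -, hKU, hUb, hU⟩ := hG.exists_superset_measure_diff_le hKc hK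
  refine (measure_mono hKU).trans (ENNReal.le_inv_one_sub_mul_of_le_add_mul hUb.measure_lt_top.ne
    hc ?_)
  calc μ U ≤ μ (U ∩ E) + μ (U \ E) := measure_le_inter_add_sdiff μ U E
    _ ≤ μ E + 2 * c * μ U := by gcongr; exact inter_subset_right

end CoveredByDenseIntervals

section MHL

variable {f : ℝ → ℝ} {C : ℝ}

theorem average_le_MHL (hf : ∀ y, |f y| ≤ C) {a b x : ℝ} (hx : x ∈ Ioo a b) :
    (b - a)⁻¹ * ∫ y in Ioo a b, |f y| ≤ MHL f x := by
  refine le_csSup ⟨C, ?_⟩ ⟨a, b, hx.1.trans hx.2, hx, rfl⟩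
  rintro _ ⟨a, b, hab, -, rfl⟩
  have hint : ∫ y in Ioo a b, |f y| ≤ C * (b - a) := by
    have := norm_setIntegral_le_of_norm_le_const (f := fun y ↦ |f y|) (μ := volume)
      (measure_Ioo_lt_top (a := a) (b := b))
      fun y _ ↦ (abs_abs (f y)).le.trans (hf y)
    rw [Real.volume_real_Ioo_of_le hab.le, Real.norm_eq_abs] at this
    exact (le_abs_self _).trans this
  rw [inv_mul_le_iff₀ (sub_pos.2 hab), mul_comm]
  exact hint

theorem exists_Ioo_subset_lt_MHL (hf : ∀ y, |f y| ≤ C) {r x : ℝ} (hx : r < MHL f x) :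
    ∃ a b, x ∈ Ioo a b ∧ Ioo a b ⊆ {y | r < MHL f y} ∧
      r < (b - a)⁻¹ * ∫ y in Ioo a b, |f y| := by
  obtain ⟨_, ⟨a, b, -, hxab, rfl⟩, hr⟩ := exists_lt_of_lt_csSup
    (by exact ⟨_, x - 1, x + 1, by linarith, ⟨by linarith, by linarith⟩, rfl⟩) hx
  exact ⟨a, b, hxab, fun y hy ↦ hr.trans_le (average_le_MHL hf hy), hr⟩

end MHL

section Solyanik

variable {E : Set ℝ} {γ : ℝ}

theorem abs_indicator_add_mul_indicator_compl (hγ : 0 ≤ γ) (y : ℝ) :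
    |E.indicator 1 y + γ * Eᶜ.indicator 1 y| = 1 - (1 - γ) * Eᶜ.indicator 1 y := by
  by_cases hy : y ∈ E <;> simp [hy, abs_of_nonneg hγ]

theorem setIntegral_abs_indicator_add_mul_indicator_compl_s5 (hE : MeasurableSet E) (hγ : 0 ≤ γ)
    {a b : ℝ} (hab : a ≤ b) :
    ∫ y in Ioo a b, |E.indicator 1 y + γ * Eᶜ.indicator 1 y| =
      (b - a) - (1 - γ) * volume.real (Ioo a b \ E) := by
  simp_rw [abs_indicator_add_mul_indicator_compl hγ]
  have hone : IntegrableOn (fun _ ↦ (1 : ℝ)) (Ioo a b) := integrableOn_const measure_Ioo_lt_top.ne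
  have hind : IntegrableOn (Eᶜ.indicator 1) (Ioo a b) := hone.indicator hE.compl
  rw [integral_sub hone (hind.const_mul _),
    integral_const_mul, integral_indicator_one hE.compl, setIntegral_const, smul_eq_mul, mul_one,
    measureReal_restrict_apply hE.compl, Real.volume_real_Ioo_of_le hab, inter_comm, ← sdiff_eq]

theorem coveredByDenseIntervals_lt_MHL (hE : MeasurableSet E) (hγ : 0 ≤ γ) {α : ℝ}
    (hγα : γ < α) (hα : α < 1) :
    CoveredByDenseIntervals volume E (ENNReal.ofReal ((1 - α) / (1 - γ)))
      {x | α < MHL (fun y ↦ E.indicator 1 y + γ * Eᶜ.indicator 1 y) x} := by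
  intro x hx
  have hf (y : ℝ) : |E.indicator 1 y + γ * Eᶜ.indicator 1 y| ≤ 1 := by
    rw [abs_indicator_add_mul_indicator_compl hγ]
    have : 0 ≤ (1 - γ) * Eᶜ.indicator (1 : ℝ → ℝ) y := by
      apply mul_nonneg <;> [linarith; exact indicator_nonneg (fun _ _ ↦ zero_le_one) y]
    linarith
  obtain ⟨a, b, hxab, hsub, hlt⟩ := exists_Ioo_subset_lt_MHL hf hx
  refine ⟨a, b, hxab, hsub, ?_⟩
  have hab : a < b := hxab.1.trans hxab.2
  rw [setIntegral_abs_indicator_add_mul_indicator_compl_s5 hE hγ hab.le,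
    lt_inv_mul_iff₀ (sub_pos.2 hab)] at hlt
  have hm : volume.real (Ioo a b \ E) ≤ (1 - α) / (1 - γ) * (b - a) := by
    rw [div_mul_eq_mul_div, le_div_iff₀ (by linarith)]
    linarith
  rw [← ofReal_measureReal ((measure_mono sdiff_subset).trans_lt measure_Ioo_lt_top).ne,
    Real.volume_Ioo, ← ENNReal.ofReal_mul (div_nonneg (by linarith) (by linarith))]
  exact ENNReal.ofReal_le_ofReal hm

end Solyanik

theorem Set.OrdConnected.isBounded_of_volume_ne_top {s : Set ℝ} (hs : s.OrdConnected)
    (hfin : volume s ≠ ∞) : IsBounded s := by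
  refine Metric.isBounded_iff.2 ⟨volume.real s, fun y hy z hz ↦ ?_⟩
  rw [Real.dist_eq, abs_sub_comm, measureReal_def, ← ENNReal.ofReal_le_iff_le_toReal hfin,
    ← Real.volume_interval]
  exact measure_mono (hs.uIcc_subset hy hz)

theorem IsOpen.eq_Ioo_csInf_csSup {α : Type*} [ConditionallyCompleteLinearOrder α]
    [TopologicalSpace α] [OrderTopology α] [DenselyOrdered α] [NoMinOrder α] [NoMaxOrder α]
    {s : Set α} (ho : IsOpen s) (hc : IsConnected s) (hb : BddBelow s) (ha : BddAbove s) :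
    s = Ioo (sInf s) (sSup s) :=
  (hc.Ioo_csInf_csSup_subset hb ha).antisymm' <| by
    rw [← interior_Icc]
    exact ho.subset_interior_iff.2 (subset_Icc_csInf_csSup hb ha)

theorem IsOpen.exists_connectedComponentIn_eq_Ioo {G : Set ℝ} (hG : IsOpen G)
    (hfin : volume G ≠ ∞) {x : ℝ} (hx : x ∈ G) :
    ∃ c d, c < d ∧ connectedComponentIn G x = Ioo c d := by
  set J := connectedComponentIn G x
  have hJ : IsConnected J := isConnected_connectedComponentIn_iff.2 hx
  have hJb : IsBounded J := hJ.isPreconnected.ordConnected.isBounded_of_volume_ne_top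
    (ne_top_of_le_ne_top hfin (measure_mono (connectedComponentIn_subset G x)))
  have hJI := hG.connectedComponentIn.eq_Ioo_csInf_csSup hJ hJb.bddBelow hJb.bddAbove
  have hxJ : x ∈ Ioo (sInf J) (sSup J) := hJI ▸ mem_connectedComponentIn hx
  exact ⟨_, _, hxJ.1.trans hxJ.2, hJI⟩

theorem MeasureTheory.measure_le_of_forall_connectedComponentIn {X : Type*} [TopologicalSpace X]
    [LocallyConnectedSpace X] [SeparableSpace X] [MeasurableSpace X] [OpensMeasurableSpace X]
    (ν : Measure X) {G E : Set X} {k : ℝ≥0∞} (hG : IsOpen G) (hE : MeasurableSet E)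
    (h : ∀ x ∈ G, ν (connectedComponentIn G x) ≤ k * ν (connectedComponentIn G x ∩ E)) :
    ν G ≤ k * ν (G ∩ E) := by
  set 𝒞 := connectedComponentIn G '' G
  have hdisj : 𝒞.PairwiseDisjoint id := by
    rintro _ ⟨x, -, rfl⟩ _ ⟨y, -, rfl⟩ hne
    refine disjoint_left.2 fun z hzx hzy ↦ hne ?_
    exact (connectedComponentIn_eq hzx).trans (connectedComponentIn_eq hzy).symm
  have hopen : ∀ J ∈ 𝒞, IsOpen J := by
    rintro _ ⟨x, -, rfl⟩
    exact hG.connectedComponentIn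
  have hcount : 𝒞.Countable := hdisj.countable_of_isOpen hopen <| by
    rintro _ ⟨x, hx, rfl⟩
    exact ⟨x, mem_connectedComponentIn hx⟩
  have hG𝒞 : G = ⋃ J ∈ 𝒞, J := by
    refine (iUnion₂_subset ?_).antisymm' fun x hx ↦ mem_biUnion (mem_image_of_mem _ hx)
      (mem_connectedComponentIn hx)
    rintro _ ⟨x, -, rfl⟩
    exact connectedComponentIn_subset G x
  have hmeas : ∀ J ∈ 𝒞, MeasurableSet J := fun J hJ ↦ (hopen J hJ).measurableSet
  calc ν G = ∑' J : 𝒞, ν J := by rw [hG𝒞]; exact measure_biUnion hcount hdisj hmeas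
    _ ≤ ∑' J : 𝒞, k * ν (J ∩ E) := by
        refine ENNReal.tsum_le_tsum fun ⟨_, x, hx, rfl⟩ ↦ h x hx
    _ = k * ν (G ∩ E) := by
        rw [ENNReal.tsum_mul_left, hG𝒞, iUnion₂_inter, measure_biUnion (f := (· ∩ E)) hcount
          (hdisj.mono fun J ↦ inter_subset_left) fun J hJ ↦ (hmeas J hJ).inter hE]

theorem measure_Ioo_le_of_volume_diff_le {ν : Measure ℝ} {β : ℝ}
    (hν : ∀ a b : ℝ, a < b → ∀ F ⊆ Ioo a b, MeasurableSet F →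
      ν F ≤ ENNReal.ofReal (2 * ((volume F).toReal / (b - a)) ^ (1 / β)) * ν (Ioo a b))
    (hβ : 1 ≤ β) {ρ c d : ℝ} {E : Set ℝ} (hρ : 0 ≤ ρ) (hρβ : 4 * ρ ^ (1 / β) < 1) (hcd : c < d)
    (hE : MeasurableSet E) (hfin : ν (Ioo c d) ≠ ∞)
    (hJ : volume (Ioo c d \ E) ≤ 2 * ENNReal.ofReal ρ * volume (Ioo c d)) :
    ν (Ioo c d) ≤ (1 - ENNReal.ofReal (4 * ρ ^ (1 / β)))⁻¹ * ν (Ioo c d ∩ E) := by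
  have hratio : (volume (Ioo c d \ E)).toReal / (d - c) ≤ 2 * ρ := by
    rw [div_le_iff₀ (sub_pos.2 hcd)]
    simpa [Real.volume_Ioo, ENNReal.toReal_ofReal hρ, ENNReal.toReal_ofReal (sub_pos.2 hcd).le,
      mul_assoc] using
      ENNReal.toReal_mono (ENNReal.mul_ne_top (by finiteness) measure_Ioo_lt_top.ne) hJ
  have hcoef : 2 * ((volume (Ioo c d \ E)).toReal / (d - c)) ^ (1 / β) ≤ 4 * ρ ^ (1 / β) := by
    have h2 : (2 : ℝ) ^ (1 / β) ≤ 2 := by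
      simpa using Real.rpow_le_rpow_of_exponent_le one_le_two
        ((div_le_one (by linarith)).2 hβ)
    calc 2 * ((volume (Ioo c d \ E)).toReal / (d - c)) ^ (1 / β) ≤ 2 * (2 * ρ) ^ (1 / β) := by
          gcongr
        _ ≤ 4 * ρ ^ (1 / β) := by
          rw [Real.mul_rpow zero_le_two hρ]
          nlinarith [Real.rpow_nonneg hρ (1 / β)]
  refine ENNReal.le_inv_one_sub_mul_of_le_add_mul hfin (ENNReal.ofReal_lt_one.2 hρβ) ?_
  calc ν (Ioo c d) ≤ ν (Ioo c d ∩ E) + ν (Ioo c d \ E) := measure_le_inter_add_sdiff ν _ E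
    _ ≤ ν (Ioo c d ∩ E) + ENNReal.ofReal (4 * ρ ^ (1 / β)) * ν (Ioo c d) := by
        gcongr
        exact (hν c d hcd _ sdiff_subset (measurableSet_Ioo.diff hE)).trans (by gcongr)

theorem four_mul_rpow_one_div_lt_one {ρ β : ℝ} (hρ : 0 ≤ ρ) (hβ : 0 < β) (h : ρ < 4 ^ (-β)) :
    4 * ρ ^ (1 / β) < 1 := by
  have : ρ ^ (1 / β) < ((4 : ℝ) ^ (-β)) ^ (1 / β) := Real.rpow_lt_rpow hρ h (by positivity)
  rw [← Real.rpow_mul (by norm_num), neg_mul, mul_one_div_cancel hβ.ne', Real.rpow_neg_one] at this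
  linarith

theorem stmt5_general (w : ℝ → ℝ)
    (hloc : LocallyIntegrable w volume) (β : ℝ) (hβ : 1 ≤ β)
    (habs : ∀ a b : ℝ, a < b → ∀ E ⊆ Set.Ioo a b, MeasurableSet E →
      (∫⁻ x in E, ENNReal.ofReal (w x)) ≤
        ENNReal.ofReal (2 * ((volume E).toReal / (b - a)) ^ (1 / β)) *
          ∫⁻ x in Set.Ioo a b, ENNReal.ofReal (w x))
    (E : Set ℝ) (hE : MeasurableSet E) (h1 : volume E < ⊤)
    (α γ : ℝ) (hγ : 0 ≤ γ) (hγα : γ < α) (hα : α < 1)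
    (hsmall : (1 - α) / (1 - γ) < (4 : ℝ) ^ (-β)) :
    (∫⁻ x in {x | α < MHL (fun y => E.indicator 1 y + γ * Eᶜ.indicator 1 y) x},
        ENNReal.ofReal (w x)) ≤
      ENNReal.ofReal ((1 - 4 * ((1 - α) / (1 - γ)) ^ (1 / β))⁻¹) *
        ∫⁻ x in E, ENNReal.ofReal (w x) := by
  have hρ : 0 ≤ (1 - α) / (1 - γ) := div_nonneg (by linarith) (by linarith)
  have hρβ := four_mul_rpow_one_div_lt_one hρ (by linarith) hsmall
  have h2ρ : 2 * ENNReal.ofReal ((1 - α) / (1 - γ)) < 1 := by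
    have : (4 : ℝ) ^ (-β) ≤ 4⁻¹ := by
      rw [← Real.rpow_neg_one]
      exact Real.rpow_le_rpow_of_exponent_le (by norm_num) (neg_le_neg hβ)
    rw [← ENNReal.ofReal_ofNat 2, ← ENNReal.ofReal_mul zero_le_two]
    exact ENNReal.ofReal_lt_one.2 (by linarith)
  have hG := coveredByDenseIntervals_lt_MHL hE hγ hγα hα
  have hGfin := ((hG.measure_le h2ρ).trans_lt (ENNReal.mul_lt_top (by simpa using h2ρ) h1)).ne
  simp only [← withDensity_apply' _] at habs ⊢
  rw [ENNReal.ofReal_inv_of_pos (by linarith), ENNReal.ofReal_sub _ (by positivity),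
    ENNReal.ofReal_one]
  refine (measure_le_of_forall_connectedComponentIn _ hG.isOpen hE fun x hx ↦ ?_).trans
    (by gcongr; exact inter_subset_right)
  obtain ⟨c, d, hcd, hJ⟩ := hG.isOpen.exists_connectedComponentIn_eq_Ioo hGfin hx
  have hdiff := (hG.connectedComponentIn x).measure_diff_le hE
  rw [hJ] at hdiff ⊢
  refine measure_Ioo_le_of_volume_diff_le habs hβ hρ hρβ hcd hE ?_ hdiff
  rw [withDensity_apply' _]
  exact ((hloc.integrableOn_isCompact isCompact_Icc).mono_set
    Ioo_subset_Icc_self).lintegral_lt_top.ne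

/-- weighted one-dimensional Solyanik estimate. -/
theorem stmt5 (w : ℝ → ℝ) (hw : ∀ x, 0 ≤ w x) (hmeas : Measurable w)
    (hloc : LocallyIntegrable w volume) (β : ℝ) (hβ : 1 ≤ β)
    (habs : ∀ a b : ℝ, a < b → ∀ E ⊆ Set.Ioo a b, MeasurableSet E →
      (∫⁻ x in E, ENNReal.ofReal (w x)) ≤
        ENNReal.ofReal (2 * ((volume E).toReal / (b - a)) ^ (1 / β)) *
          ∫⁻ x in Set.Ioo a b, ENNReal.ofReal (w x))
    (E : Set ℝ) (hE : MeasurableSet E) (h0 : 0 < volume E) (h1 : volume E < ⊤)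
    (α γ : ℝ) (hγ : 0 ≤ γ) (hγα : γ < α) (hα : α < 1)
    (hsmall : (1 - α) / (1 - γ) < (4 : ℝ) ^ (-β)) :
    (∫⁻ x in {x | α < MHL (fun y => E.indicator 1 y + γ * Eᶜ.indicator 1 y) x},
        ENNReal.ofReal (w x)) ≤
      ENNReal.ofReal ((1 - 4 * ((1 - α) / (1 - γ)) ^ (1 / β))⁻¹) *
        ∫⁻ x in E, ENNReal.ofReal (w x) :=
  stmt5_general w hloc β hβ habs E hE h1 α γ hγ hγα hα hsmall
end

section
/- For every finite collection {I_j}_{j=1}^N of bounded open intervals in ℝ there exists a subcollection {I_{j_k}}_k such that ∪_k I_{j_k} = ∪_j I_j and Σ_k 1_{I_{j_k}}(x) ≤ 2 for every x ∈ ℝ. -/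
open MeasureTheory Set
open scoped ENNReal NNReal

private lemma stmt6_core {a1 b1 a2 b2 a3 b3 x : ℝ} (h1 : x ∈ Set.Ioo a1 b1)
    (h2 : x ∈ Set.Ioo a2 b2) (ha : a1 ≤ a3) (hb : b3 ≤ b2) :
    Set.Ioo a3 b3 ⊆ Set.Ioo a1 b1 ∪ Set.Ioo a2 b2 := by
  intro y hy
  by_cases h : y < b1
  · exact Or.inl ⟨lt_of_le_of_lt ha hy.1, h⟩
  · exact Or.inr ⟨(h2.1.trans h1.2).trans_le (le_of_not_gt h), lt_of_lt_of_le hy.2 hb⟩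

private lemma stmt6_tri {a1 b1 a2 b2 a3 b3 x : ℝ} (h1 : x ∈ Set.Ioo a1 b1)
    (h2 : x ∈ Set.Ioo a2 b2) (h3 : x ∈ Set.Ioo a3 b3) :
    Set.Ioo a1 b1 ⊆ Set.Ioo a2 b2 ∪ Set.Ioo a3 b3 ∨
    Set.Ioo a2 b2 ⊆ Set.Ioo a1 b1 ∪ Set.Ioo a3 b3 ∨
    Set.Ioo a3 b3 ⊆ Set.Ioo a1 b1 ∪ Set.Ioo a2 b2 := by
  rcases le_total a1 a2 with h12 | h21 <;> rcases le_total b1 b2 with g12 | g21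
  · -- a1 ≤ a2, b1 ≤ b2
    rcases le_total a1 a3 with p | p <;> rcases le_total b3 b2 with q | q
    · exact Or.inr (Or.inr (stmt6_core h1 h2 p q))
    · exact Or.inr (Or.inl (stmt6_core h1 h3 h12 q))
    · refine Or.inl ?_
      have := stmt6_core h3 h2 p g12
      rwa [Set.union_comm] at this
    · refine Or.inr (Or.inl ?_)
      have := stmt6_core h3 h3 (p.trans h12) q
      rw [Set.union_self] at this
      exact this.trans Set.subset_union_right
  · -- a1 ≤ a2, b2 ≤ b1 : I2 ⊆ I1
    refine Or.inr (Or.inl ?_)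
    have := stmt6_core h1 h1 h12 g21
    rw [Set.union_self] at this
    exact this.trans Set.subset_union_left
  · -- a2 ≤ a1, b1 ≤ b2 : I1 ⊆ I2
    refine Or.inl ?_
    have := stmt6_core h2 h2 h21 g12
    rw [Set.union_self] at this
    exact this.trans Set.subset_union_left
  · -- a2 ≤ a1, b2 ≤ b1
    rcases le_total a2 a3 with p | p <;> rcases le_total b3 b1 with q | q
    · refine Or.inr (Or.inr ?_)
      have := stmt6_core h2 h1 p q
      rwa [Set.union_comm] at this
    · exact Or.inl (stmt6_core h2 h3 h21 q)
    · refine Or.inr (Or.inl ?_)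
      have := stmt6_core h3 h1 p g21
      rwa [Set.union_comm] at this
    · refine Or.inl ?_
      have := stmt6_core h3 h3 (p.trans h21) q
      rw [Set.union_self] at this
      exact this.trans Set.subset_union_right

/-- the classical one-dimensional covering lemma: any finite family of
bounded open intervals has a subfamily with the same union and overlap at most `2`. -/
theorem stmt6 (N : ℕ) (a b : Fin N → ℝ) :
    ∃ s : Finset (Fin N),
      (⋃ k ∈ s, Set.Ioo (a k) (b k)) = (⋃ j, Set.Ioo (a j) (b j)) ∧
      ∀ x : ℝ,
        (∑ k ∈ s, Set.indicator (Set.Ioo (a k) (b k)) (fun _ => (1 : ℝ)) x) ≤ 2 := by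
  classical
  have hPuniv : (⋃ k ∈ (Finset.univ : Finset (Fin N)), Set.Ioo (a k) (b k))
      = ⋃ j, Set.Ioo (a j) (b j) := by simp
  obtain ⟨s, hsmem, hmin⟩ := Finset.exists_min_image
    (Finset.univ.filter
      (fun t => (⋃ k ∈ t, Set.Ioo (a k) (b k)) = ⋃ j, Set.Ioo (a j) (b j)))
    Finset.card ⟨Finset.univ, by simp [hPuniv]⟩
  have Ps : (⋃ k ∈ s, Set.Ioo (a k) (b k)) = ⋃ j, Set.Ioo (a j) (b j) :=
    (Finset.mem_filter.mp hsmem).2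
  refine ⟨s, Ps, fun x => ?_⟩
  -- no three intervals of s contain x
  have key : ∀ j1 j2 j3 : Fin N, j1 ∈ s → j2 ∈ s → j3 ∈ s → j1 ≠ j2 → j1 ≠ j3 →
      Set.Ioo (a j1) (b j1) ⊆ Set.Ioo (a j2) (b j2) ∪ Set.Ioo (a j3) (b j3) → False := by
    intro j1 j2 j3 hj1 hj2 hj3 h12 h13 hsub
    have hsub' : Set.Ioo (a j1) (b j1) ⊆ ⋃ k ∈ s.erase j1, Set.Ioo (a k) (b k) := by
      refine hsub.trans (Set.union_subset ?_ ?_)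
      · exact fun y hy => Set.mem_biUnion (Finset.mem_erase.mpr ⟨h12.symm, hj2⟩) hy
      · exact fun y hy => Set.mem_biUnion (Finset.mem_erase.mpr ⟨h13.symm, hj3⟩) hy
    have heq : (⋃ k ∈ s, Set.Ioo (a k) (b k)) = ⋃ k ∈ s.erase j1, Set.Ioo (a k) (b k) := by
      conv_lhs => rw [← Finset.insert_erase hj1]
      rw [Finset.set_biUnion_insert]
      exact Set.union_eq_self_of_subset_left hsub'
    have hPe : (⋃ k ∈ s.erase j1, Set.Ioo (a k) (b k)) = ⋃ j, Set.Ioo (a j) (b j) :=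
      heq ▸ Ps
    have hle := hmin (s.erase j1) (Finset.mem_filter.mpr ⟨Finset.mem_univ _, hPe⟩)
    have := Finset.card_erase_lt_of_mem hj1
    omega
  have hcard : (s.filter (fun k => x ∈ Set.Ioo (a k) (b k))).card ≤ 2 := by
    by_contra h
    push_neg at h
    obtain ⟨j1, j2, j3, hj1, hj2, hj3, h12, h13, h23⟩ := Finset.two_lt_card_iff.mp h
    rw [Finset.mem_filter] at hj1 hj2 hj3
    rcases stmt6_tri hj1.2 hj2.2 hj3.2 with hs | hs | hs
    · exact key j1 j2 j3 hj1.1 hj2.1 hj3.1 h12 h13 hs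
    · exact key j2 j1 j3 hj2.1 hj1.1 hj3.1 (Ne.symm h12) h23 hs
    · exact key j3 j1 j2 hj3.1 hj1.1 hj2.1 (Ne.symm h13) (Ne.symm h23) hs
  calc (∑ k ∈ s, Set.indicator (Set.Ioo (a k) (b k)) (fun _ => (1 : ℝ)) x)
      = ∑ k ∈ s, (if x ∈ Set.Ioo (a k) (b k) then (1 : ℝ) else 0) := by
        refine Finset.sum_congr rfl fun k _ => ?_
        rw [Set.indicator_apply]
    _ = ((s.filter (fun k => x ∈ Set.Ioo (a k) (b k))).card : ℝ) := by
        rw [Finset.sum_boole]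
    _ ≤ 2 := by exact_mod_cast hcard
end

section
/- Let E ⊆ ℝⁿ be measurable, j,k ∈ {1,…,n}, and 0 < α < 1. Let M_j denote the directional maximal operator in the j-th coordinate direction. Define E_α := {x : M_k(1_E)(x) > α}. Then pointwise M_j M_k (1_E)(x) ≤ M_j(1_{E_α} + α·1_{E_α^c})(x) for every x ∈ ℝⁿ. -/
open MeasureTheory Set
open scoped ENNReal NNReal

/-- The directional maximal operator in the `j`-th coordinate direction on `ℝⁿ`. -/
noncomputable def Mdir {n : ℕ} (j : Fin n) (f : (Fin n → ℝ) → ℝ) (x : Fin n → ℝ) : ℝ :=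
  sSup {r : ℝ | ∃ s t : ℝ, s < x j ∧ x j < t ∧
    r = (t - s)⁻¹ * ∫ u in Set.Ioo s t, |f (Function.update x j u)|}

/-! Since `0 ≤ M_k 1_E ≤ 1` everywhere and `M_k 1_E ≤ α` off `E_α`, we have
`M_k 1_E ≤ 1_{E_α} + α 1_{E_αᶜ}` pointwise, and `M_j` is monotone. Monotonicity needs the larger
function to be integrable along lines (a non-integrable integral is `0`), hence `E_α` measurable:
the averages of a bounded measurable function over segments depend continuously on the endpoints,
so `M_k 1_E` is a supremum over countably many rational segments. -/

lemma abs_indicator_one_le {α : Type*} (s : Set α) (y : α) : |s.indicator (1 : α → ℝ) y| ≤ 1 := by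
  simpa using norm_indicator_le_norm_self (s := s) (f := (1 : α → ℝ)) (a := y)

lemma continuousOn_average_Ioo {g : ℝ → ℝ} (hg : ∀ a b, IntervalIntegrable g volume a b) :
    ContinuousOn (fun p : ℝ × ℝ => (p.2 - p.1)⁻¹ * ∫ u in Ioo p.1 p.2, g u) {p | p.1 < p.2} := by
  have hprim := intervalIntegral.continuous_primitive hg 0
  have heq : EqOn (fun p : ℝ × ℝ => (p.2 - p.1)⁻¹ * ∫ u in Ioo p.1 p.2, g u)
      (fun p => (p.2 - p.1)⁻¹ * ((∫ u in (0 : ℝ)..p.2, g u) - ∫ u in (0 : ℝ)..p.1, g u))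
      {p | p.1 < p.2} := by
    rintro ⟨s, t⟩ (hst : s < t)
    dsimp only
    rw [intervalIntegral.integral_interval_sub_left (hg 0 t) (hg 0 s),
      intervalIntegral.integral_of_le hst.le, integral_Ioc_eq_integral_Ioo]
  refine ContinuousOn.congr ?_ heq
  refine ContinuousOn.mul ?_
    ((hprim.comp continuous_snd).sub (hprim.comp continuous_fst)).continuousOn
  exact (continuous_snd.sub continuous_fst).continuousOn.inv₀ fun p hp => (sub_pos.2 hp).ne'

namespace Mdir

variable {n : ℕ} {f g : (Fin n → ℝ) → ℝ} {C : ℝ}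

noncomputable def average (j : Fin n) (f : (Fin n → ℝ) → ℝ) (x : Fin n → ℝ) (s t : ℝ) : ℝ :=
  (t - s)⁻¹ * ∫ u in Ioo s t, |f (Function.update x j u)|

lemma averages_nonempty (j : Fin n) (f : (Fin n → ℝ) → ℝ) (x : Fin n → ℝ) :
    {r | ∃ s t : ℝ, s < x j ∧ x j < t ∧ r = average j f x s t}.Nonempty :=
  ⟨_, x j - 1, x j + 1, by linarith, by linarith, rfl⟩

lemma average_nonneg (j : Fin n) (f : (Fin n → ℝ) → ℝ) (x : Fin n → ℝ) {s t : ℝ} (hst : s ≤ t) :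
    0 ≤ average j f x s t :=
  mul_nonneg (inv_nonneg.2 (sub_nonneg.2 hst)) (integral_nonneg fun _ => abs_nonneg _)

lemma average_le (hfC : ∀ y, |f y| ≤ C) (j : Fin n) (x : Fin n → ℝ) {s t : ℝ} (hst : s < t) :
    average j f x s t ≤ C := by
  have hts : 0 < t - s := sub_pos.2 hst
  have hint : ‖∫ u in Ioo s t, |f (Function.update x j u)|‖ ≤ C * (t - s) := by
    have := norm_setIntegral_le_of_norm_le_const (μ := volume) (s := Ioo s t)
      (f := fun u => |f (Function.update x j u)|) measure_Ioo_lt_top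
      (fun u _ => by simpa only [Real.norm_eq_abs, abs_abs] using hfC _)
    rwa [Real.volume_real_Ioo_of_le hst.le] at this
  rw [average, inv_mul_le_iff₀ hts, mul_comm]
  exact (Real.le_norm_self _).trans hint

lemma bddAbove_averages (hfC : ∀ y, |f y| ≤ C) (j : Fin n) (x : Fin n → ℝ) :
    BddAbove {r | ∃ s t : ℝ, s < x j ∧ x j < t ∧ r = average j f x s t} := by
  refine ⟨C, ?_⟩
  rintro _ ⟨s, t, hs, ht, rfl⟩
  exact average_le hfC j x (hs.trans ht)

lemma nonneg (j : Fin n) (f : (Fin n → ℝ) → ℝ) (x : Fin n → ℝ) : 0 ≤ Mdir j f x := by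
  refine Real.sSup_nonneg ?_
  rintro _ ⟨s, t, hs, ht, rfl⟩
  exact average_nonneg j f x (hs.trans ht).le

lemma le_of_forall_abs_le (hfC : ∀ y, |f y| ≤ C) (j : Fin n) (x : Fin n → ℝ) : Mdir j f x ≤ C := by
  refine csSup_le (averages_nonempty j f x) ?_
  rintro _ ⟨s, t, hs, ht, rfl⟩
  exact average_le hfC j x (hs.trans ht)

lemma integrableOn_line (hf : Measurable f) (hfC : ∀ y, |f y| ≤ C) (j : Fin n) (x : Fin n → ℝ)
    {s : Set ℝ} (hs : volume s ≠ ∞) :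
    IntegrableOn (fun u => |f (Function.update x j u)|) s :=
  Measure.integrableOn_of_bounded hs (hf.comp (measurable_update x)).abs.aestronglyMeasurable
    (ae_of_all _ fun u => by simpa only [Real.norm_eq_abs, abs_abs] using hfC _)

theorem mono (hfg : ∀ y, |f y| ≤ |g y|) (hg : Measurable g) (hgC : ∀ y, |g y| ≤ C)
    (j : Fin n) (x : Fin n → ℝ) : Mdir j f x ≤ Mdir j g x := by
  refine csSup_le (averages_nonempty j f x) ?_
  rintro _ ⟨s, t, hs, ht, rfl⟩
  refine le_csSup_of_le (bddAbove_averages hgC j x) ⟨s, t, hs, ht, rfl⟩ ?_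
  refine mul_le_mul_of_nonneg_left ?_ (inv_nonneg.2 (sub_nonneg.2 (hs.trans ht).le))
  exact integral_mono_of_nonneg (ae_of_all _ fun _ => abs_nonneg _)
    (integrableOn_line hg hgC j x measure_Ioo_lt_top.ne) (ae_of_all _ fun _ => hfg _)

lemma continuousOn_average (hf : Measurable f) (hfC : ∀ y, |f y| ≤ C) (j : Fin n)
    (x : Fin n → ℝ) :
    ContinuousOn (fun p : ℝ × ℝ => average j f x p.1 p.2) {p | p.1 < p.2} :=
  continuousOn_average_Ioo fun _ _ =>
    (intervalIntegrable_iff.2 (integrableOn_line hf hfC j x measure_Ioc_lt_top.ne))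

theorem lt_iff_exists_rat (hf : Measurable f) (hfC : ∀ y, |f y| ≤ C) (j : Fin n)
    (x : Fin n → ℝ) (β : ℝ) :
    β < Mdir j f x ↔ ∃ q₁ q₂ : ℚ, (q₁ : ℝ) < x j ∧ x j < q₂ ∧ β < average j f x q₁ q₂ := by
  constructor
  · intro h
    obtain ⟨_, ⟨s, t, hs, ht, rfl⟩, hβ⟩ := exists_lt_of_lt_csSup (averages_nonempty j f x) h
    set U := {p : ℝ × ℝ | p.1 < x j ∧ x j < p.2}
    have hU : IsOpen U :=
      (isOpen_lt continuous_fst continuous_const).inter (isOpen_lt continuous_const continuous_snd)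
    have hcont : ContinuousOn (fun p : ℝ × ℝ => average j f x p.1 p.2) U :=
      (continuousOn_average hf hfC j x).mono fun p hp => hp.1.trans hp.2
    obtain ⟨⟨q₁, q₂⟩, ⟨h₁, h₂⟩, hq⟩ :=
      (Rat.denseRange_cast.prodMap Rat.denseRange_cast).exists_mem_open
        (hcont.isOpen_inter_preimage hU isOpen_Ioi) ⟨(s, t), ⟨hs, ht⟩, hβ⟩
    exact ⟨q₁, q₂, h₁, h₂, hq⟩
  · rintro ⟨q₁, q₂, h₁, h₂, hq⟩
    exact hq.trans_le (le_csSup (bddAbove_averages hfC j x) ⟨q₁, q₂, h₁, h₂, rfl⟩)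

lemma measurable_average (hf : Measurable f) (j : Fin n) (s t : ℝ) :
    Measurable fun x => average j f x s t := by
  have hline : Measurable fun p : (Fin n → ℝ) × ℝ => |f (Function.update p.1 j p.2)| :=
    (hf.comp (continuous_fst.update j continuous_snd).measurable).abs
  exact (hline.stronglyMeasurable.integral_prod_right'
    (ν := volume.restrict (Ioo s t))).measurable.const_mul _

theorem measurable (hf : Measurable f) (hfC : ∀ y, |f y| ≤ C) (j : Fin n) :
    Measurable (Mdir j f) := by
  refine measurable_of_Ioi fun β => ?_
  have hunion : Mdir j f ⁻¹' Ioi β = ⋃ q : ℚ × ℚ,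
      {x | (q.1 : ℝ) < x j} ∩ {x | x j < (q.2 : ℝ)} ∩ {x | β < average j f x q.1 q.2} := by
    ext x
    simp only [mem_preimage, mem_Ioi, lt_iff_exists_rat hf hfC, mem_iUnion, mem_inter_iff,
      Prod.exists, and_assoc]
    rfl
  rw [hunion]
  exact .iUnion fun q => ((measurableSet_lt measurable_const (measurable_pi_apply j)).inter
    (measurableSet_lt (measurable_pi_apply j) measurable_const)).inter
    (measurableSet_lt measurable_const (measurable_average hf j _ _))

end Mdir

theorem stmt15_general {n : ℕ} (E : Set (Fin n → ℝ)) (hE : MeasurableSet E)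
    (j k : Fin n) (α : ℝ) (x : Fin n → ℝ) :
    Mdir j (Mdir k (E.indicator 1)) x ≤
      Mdir j (fun y =>
        Set.indicator {z | α < Mdir k (E.indicator 1) z} 1 y +
          α * Set.indicator {z | α < Mdir k (E.indicator 1) z}ᶜ 1 y) x := by
  set F := Mdir k (E.indicator 1)
  have hF : Measurable F := Mdir.measurable (measurable_one.indicator hE) (abs_indicator_one_le E) k
  have hEα : MeasurableSet {z | α < F z} := measurableSet_lt measurable_const hF
  have hG : ∀ y, {z | α < F z}.indicator 1 y + α * {z | α < F z}ᶜ.indicator 1 y =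
      if α < F y then 1 else α := by
    intro y
    by_cases hy : α < F y <;> simp [hy]
  refine Mdir.mono (C := max 1 |α|) (fun y => ?_) ?_ (fun y => ?_) j x
  · rw [hG, abs_of_nonneg (Mdir.nonneg k _ y)]
    split_ifs with hy
    · simpa using Mdir.le_of_forall_abs_le (abs_indicator_one_le E) k y
    · exact (not_lt.1 hy).trans (le_abs_self α)
  · exact ((measurable_one.indicator hEα).add
      ((measurable_one.indicator hEα.compl).const_mul α))
  · rw [hG]
    split_ifs <;> simp

/-- pointwise domination of compositions of directional maximal operators. -/
theorem stmt15 {n : ℕ} (E : Set (Fin n → ℝ)) (hE : MeasurableSet E)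
    (j k : Fin n) (α : ℝ) (hα0 : 0 < α) (hα1 : α < 1) (x : Fin n → ℝ) :
    Mdir j (Mdir k (E.indicator 1)) x ≤
      Mdir j (fun y =>
        Set.indicator {z | α < Mdir k (E.indicator 1) z} 1 y +
          α * Set.indicator {z | α < Mdir k (E.indicator 1) z}ᶜ 1 y) x :=
  stmt15_general E hE j k α x
end

section
/- Let w be a weight on ℝ satisfying the property that for every interval I and measurable E ⊆ I, w(E)/w(I) ≤ 2 (|E|/|I|)^{1/β} for some β ≥ 1 (as holds for A_∞ weights with β = 4[w]_{A_∞}). Let {I_k}_k be a finite collection of intervals with Σ_k 1_{I_k} ≤ 2 pointwise, and suppose each I_k satisfies |I_k ∩ E^c|/|I_k| ≤ η for some measurable set E and η ∈ (0,1). Then w(∪_k I_k) ≤ w(E) + 4 η^{1/β} w(∪_k I_k); in particular, if 4η^{1/β} < 1, then w(∪_k I_k) ≤ (1 - 4η^{1/β})^{-1} w(E). -/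
open MeasureTheory Set
open scoped ENNReal NNReal

/-!
Let `U = ⋃ₖ Iₖ`. The `A∞`-type hypothesis applied to `F = Iₖ ∖ E` gives
`w(Iₖ ∖ E) ≤ 2 η^{1/β} w(Iₖ)`, and since the `Iₖ` overlap at most twice, `∑ₖ w(Iₖ) ≤ 2 w(U)`.
Hence `w(U) ≤ w(E) + w(U ∖ E) ≤ w(E) + 4 η^{1/β} w(U)`. As `w` is locally integrable,
`w(U) < ∞` and the last term can be absorbed into the left-hand side.
-/

namespace MeasureTheory

theorem sum_measure_le_mul_measure_iUnion {α ι : Type*} [MeasurableSpace α] [Fintype ι]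
    (μ : Measure α) {s : ι → Set α} (hs : ∀ i, MeasurableSet (s i)) {m : ℝ}
    (hm : ∀ x, ∑ i, (s i).indicator (fun _ => (1 : ℝ)) x ≤ m) :
    ∑ i, μ (s i) ≤ ENNReal.ofReal m * μ (⋃ i, s i) := by
  set U := ⋃ i, s i
  have hcount : ∀ x, ∑ i, (s i).indicator (1 : α → ℝ≥0∞) x ≤ ENNReal.ofReal m := fun x => by
    have hind : ∀ i, (s i).indicator (1 : α → ℝ≥0∞) x =
        ENNReal.ofReal ((s i).indicator (fun _ => (1 : ℝ)) x) := fun i => by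
      by_cases hx : x ∈ s i <;> simp [hx]
    simp only [hind]
    rw [← ENNReal.ofReal_sum_of_nonneg fun i _ => indicator_nonneg (fun _ _ => zero_le_one) x]
    exact ENNReal.ofReal_le_ofReal (hm x)
  calc ∑ i, μ (s i) = ∑ i, μ.restrict U (s i) := by
        refine Finset.sum_congr rfl fun i _ => ?_
        rw [Measure.restrict_apply (hs i), inter_eq_left.2 (subset_iUnion s i)]
    _ = ∫⁻ x, ∑ i, (s i).indicator 1 x ∂μ.restrict U := by
        rw [lintegral_finsetSum _ fun i _ => measurable_one.indicator (hs i)]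
        exact Finset.sum_congr rfl fun i _ => (lintegral_indicator_one (hs i)).symm
    _ ≤ ∫⁻ _, ENNReal.ofReal m ∂μ.restrict U := lintegral_mono hcount
    _ = ENNReal.ofReal m * μ U := by rw [lintegral_const, Measure.restrict_apply_univ]

theorem measure_iUnion_le_add_of_measure_inter_compl_le {α ι : Type*} [MeasurableSpace α]
    [Fintype ι] {μ : Measure α} {s : ι → Set α} {E : Set α} {δ m : ℝ} (hδ : 0 ≤ δ)
    (hcompl : ∀ i, μ (s i ∩ Eᶜ) ≤ ENNReal.ofReal δ * μ (s i))
    (hsum : ∑ i, μ (s i) ≤ ENNReal.ofReal m * μ (⋃ i, s i)) :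
    μ (⋃ i, s i) ≤ μ E + ENNReal.ofReal (δ * m) * μ (⋃ i, s i) := by
  have hdiff : μ ((⋃ i, s i) \ E) ≤ ∑ i, μ (s i ∩ Eᶜ) := by
    rw [sdiff_eq, iUnion_inter]
    exact measure_iUnion_fintype_le μ _
  calc μ (⋃ i, s i) ≤ μ E + μ ((⋃ i, s i) \ E) :=
        (measure_le_inter_add_sdiff μ _ E).trans (add_le_add_left (measure_mono inter_subset_right) _)
    _ ≤ μ E + ∑ i, ENNReal.ofReal δ * μ (s i) :=
        add_le_add_right (hdiff.trans (Finset.sum_le_sum fun i _ => hcompl i)) _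
    _ ≤ μ E + ENNReal.ofReal δ * (ENNReal.ofReal m * μ (⋃ i, s i)) := by
        rw [← Finset.mul_sum]
        gcongr
    _ = μ E + ENNReal.ofReal (δ * m) * μ (⋃ i, s i) := by
        rw [ENNReal.ofReal_mul hδ, mul_assoc]

theorem measure_le_of_volume_le_mul_volume_Ioo {ν : Measure ℝ} {F : Set ℝ} {a b C p η : ℝ}
    (hab : a < b) (hC : 0 ≤ C) (hp : 0 ≤ p) (hη : 0 ≤ η)
    (hνF : ν F ≤ ENNReal.ofReal (C * ((volume F).toReal / (b - a)) ^ p) * ν (Ioo a b))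
    (hF : volume F ≤ ENNReal.ofReal η * volume (Ioo a b)) :
    ν F ≤ ENNReal.ofReal (C * η ^ p) * ν (Ioo a b) := by
  have hba : 0 < b - a := sub_pos.2 hab
  have hratio : (volume F).toReal / (b - a) ≤ η := by
    rw [div_le_iff₀ hba]
    rw [Real.volume_Ioo, ← ENNReal.ofReal_mul hη] at hF
    exact ENNReal.toReal_le_of_le_ofReal (by positivity) hF
  refine hνF.trans (mul_le_mul_left (ENNReal.ofReal_le_ofReal ?_) _)
  gcongr

end MeasureTheory

theorem ENNReal.le_ofReal_inv_mul_of_le_add_mul {x y : ℝ≥0∞} {c : ℝ} (hx : x ≠ ∞) (hc0 : 0 ≤ c)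
    (hc1 : c < 1) (h : x ≤ y + ENNReal.ofReal c * x) :
    x ≤ ENNReal.ofReal ((1 - c)⁻¹) * y := by
  have hc : 0 < 1 - c := sub_pos.2 hc1
  have habsorb : ENNReal.ofReal (1 - c) * x ≤ y := by
    rw [ENNReal.ofReal_sub _ hc0, ENNReal.ofReal_one, ENNReal.sub_mul fun _ _ => hx, one_mul]
    exact tsub_le_iff_right.2 h
  calc x = ENNReal.ofReal ((1 - c)⁻¹) * (ENNReal.ofReal (1 - c) * x) := by
        rw [← mul_assoc, ← ENNReal.ofReal_mul (inv_nonneg.2 hc.le), inv_mul_cancel₀ hc.ne',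
          ENNReal.ofReal_one, one_mul]
    _ ≤ ENNReal.ofReal ((1 - c)⁻¹) * y := mul_le_mul_right habsorb _

theorem MeasureTheory.LocallyIntegrable.setLIntegral_ofReal_lt_top {X : Type*}
    [PseudoMetricSpace X] [ProperSpace X] [MeasurableSpace X] {μ : Measure X} {f : X → ℝ}
    (hf : LocallyIntegrable f μ) {s : Set X} (hs : Bornology.IsBounded s) :
    ∫⁻ x in s, ENNReal.ofReal (f x) ∂μ < ∞ :=
  ((hf.integrableOn_isCompact hs.isCompact_closure).mono_set subset_closure).lintegral_lt_top

theorem stmt19_general (w : ℝ → ℝ)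
    (hloc : LocallyIntegrable w volume) (β : ℝ) (hβ : 1 ≤ β)
    (habs : ∀ a b : ℝ, a < b → ∀ F ⊆ Set.Ioo a b, MeasurableSet F →
      (∫⁻ x in F, ENNReal.ofReal (w x)) ≤
        ENNReal.ofReal (2 * ((volume F).toReal / (b - a)) ^ (1 / β)) *
          ∫⁻ x in Set.Ioo a b, ENNReal.ofReal (w x))
    (N : ℕ) (a b : Fin N → ℝ) (hab : ∀ k, a k < b k)
    (hoverlap : ∀ x : ℝ,
      (∑ k : Fin N, Set.indicator (Set.Ioo (a k) (b k)) (fun _ => (1 : ℝ)) x) ≤ 2)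
    (E : Set ℝ) (hE : MeasurableSet E) (η : ℝ) (hη0 : 0 < η)
    (hcov : ∀ k : Fin N,
      volume (Set.Ioo (a k) (b k) ∩ Eᶜ) ≤
        ENNReal.ofReal η * volume (Set.Ioo (a k) (b k))) :
    (∫⁻ x in ⋃ k, Set.Ioo (a k) (b k), ENNReal.ofReal (w x)) ≤
      (∫⁻ x in E, ENNReal.ofReal (w x)) +
        ENNReal.ofReal (4 * η ^ (1 / β)) *
          ∫⁻ x in ⋃ k, Set.Ioo (a k) (b k), ENNReal.ofReal (w x) ∧
    (4 * η ^ (1 / β) < 1 →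
      (∫⁻ x in ⋃ k, Set.Ioo (a k) (b k), ENNReal.ofReal (w x)) ≤
        ENNReal.ofReal ((1 - 4 * η ^ (1 / β))⁻¹) *
          ∫⁻ x in E, ENNReal.ofReal (w x)) := by
  have hU_fin := hloc.setLIntegral_ofReal_lt_top
    (Bornology.isBounded_iUnion.2 fun k => Metric.isBounded_Ioo (a k) (b k))
  set ν := volume.withDensity fun x => ENNReal.ofReal (w x)
  have hν : ∀ s, ∫⁻ x in s, ENNReal.ofReal (w x) = ν s := fun s => (withDensity_apply' _ s).symm
  simp only [hν] at habs hU_fin ⊢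
  have hpiece : ∀ k, ν (Ioo (a k) (b k) ∩ Eᶜ) ≤
      ENNReal.ofReal (2 * η ^ (1 / β)) * ν (Ioo (a k) (b k)) := fun k =>
    measure_le_of_volume_le_mul_volume_Ioo (hab k) zero_le_two (by positivity) hη0.le
      (habs _ _ (hab k) _ inter_subset_left (measurableSet_Ioo.inter hE.compl)) (hcov k)
  have hmain := measure_iUnion_le_add_of_measure_inter_compl_le (by positivity) hpiece
    (sum_measure_le_mul_measure_iUnion ν (fun k => measurableSet_Ioo) hoverlap)
  rw [show 2 * η ^ (1 / β) * 2 = 4 * η ^ (1 / β) by ring] at hmain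
  exact ⟨hmain, fun h4 => ENNReal.le_ofReal_inv_mul_of_le_add_mul hU_fin.ne (by positivity) h4 hmain⟩

/-- absorption estimate for a family of intervals with overlap at
most `2`, each almost covered by `E`. -/
theorem stmt19 (w : ℝ → ℝ) (hw : ∀ x, 0 ≤ w x) (hmeas : Measurable w)
    (hloc : LocallyIntegrable w volume) (β : ℝ) (hβ : 1 ≤ β)
    (habs : ∀ a b : ℝ, a < b → ∀ F ⊆ Set.Ioo a b, MeasurableSet F →
      (∫⁻ x in F, ENNReal.ofReal (w x)) ≤
        ENNReal.ofReal (2 * ((volume F).toReal / (b - a)) ^ (1 / β)) *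
          ∫⁻ x in Set.Ioo a b, ENNReal.ofReal (w x))
    (N : ℕ) (a b : Fin N → ℝ) (hab : ∀ k, a k < b k)
    (hoverlap : ∀ x : ℝ,
      (∑ k : Fin N, Set.indicator (Set.Ioo (a k) (b k)) (fun _ => (1 : ℝ)) x) ≤ 2)
    (E : Set ℝ) (hE : MeasurableSet E) (η : ℝ) (hη0 : 0 < η) (hη1 : η < 1)
    (hcov : ∀ k : Fin N,
      volume (Set.Ioo (a k) (b k) ∩ Eᶜ) ≤
        ENNReal.ofReal η * volume (Set.Ioo (a k) (b k))) :
    (∫⁻ x in ⋃ k, Set.Ioo (a k) (b k), ENNReal.ofReal (w x)) ≤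
      (∫⁻ x in E, ENNReal.ofReal (w x)) +
        ENNReal.ofReal (4 * η ^ (1 / β)) *
          ∫⁻ x in ⋃ k, Set.Ioo (a k) (b k), ENNReal.ofReal (w x) ∧
    (4 * η ^ (1 / β) < 1 →
      (∫⁻ x in ⋃ k, Set.Ioo (a k) (b k), ENNReal.ofReal (w x)) ≤
        ENNReal.ofReal ((1 - 4 * η ^ (1 / β))⁻¹) *
          ∫⁻ x in E, ENNReal.ofReal (w x)) :=
  stmt19_general w hloc β hβ habs N a b hab hoverlap E hE η hη0 hcov
end
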